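/- arXiv:1909.00459 — 4 statements merged into one kernel-verified Lean document; each statement's English description precedes it below -/
import Mathlib

section
/- For every p > 0: the function h_p is convex on [0,∞) with concave derivative, lim_{x→∞} f_p(x)/h_p(x) = 1, and there exists a constant C_p > 0 such that h_p(x) ≤ C_p f_p(x) for all x ≥ 0. -/
open Filter
open scoped Topology

noncomputable section

/-- `log₊ x = max (log x) 0`. -/
def plog (x : ℝ) : ℝ := max (Real.log x) 0

/-- `f_p(x) = (1 + (log₊ x)^p) * x`. -/
def fp (p x : ℝ) : ℝ := (1 + plog x ^ p) * x

/-- The integrand in the definition of `h_p`: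
`(p/e)^p · t` on `[0, e^p]` and `(log t)^p` on `(e^p, ∞)`. -/
def hpDeriv (p t : ℝ) : ℝ :=
  if t ≤ Real.exp p then (p / Real.exp 1) ^ p * t else Real.log t ^ p

/-- `h_p(x) = ∫_0^x ((p/e)^p t 1_{[0,e^p]}(t) + (log t)^p 1_{(e^p,∞)}(t)) dt`. -/
def hp (p x : ℝ) : ℝ := ∫ t in (0:ℝ)..x, hpDeriv p t

variable {p : ℝ}

lemma slope_eq (hp0 : 0 < p) : (p / Real.exp 1) ^ p * Real.exp p = p ^ p := by
  rw [Real.div_rpow hp0.le (Real.exp_pos 1).le, Real.exp_one_rpow,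
    div_mul_cancel₀ _ (Real.exp_pos p).ne']

lemma hpDeriv_continuous (hp0 : 0 < p) : Continuous (hpDeriv p) := by
  rw [continuous_iff_continuousAt]
  intro t
  rcases lt_trichotomy t (Real.exp p) with h | h | h
  · have : (fun s => (p / Real.exp 1) ^ p * s) =ᶠ[𝓝 t] hpDeriv p := by
      filter_upwards [Iio_mem_nhds h] with s hs
      simp [hpDeriv, le_of_lt (Set.mem_Iio.mp hs)]
    exact ContinuousAt.congr (by fun_prop) this
  · subst h
    rw [← continuousWithinAt_univ, ← Set.Iic_union_Ici (a := Real.exp p)]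
    apply ContinuousWithinAt.union
    · refine ContinuousWithinAt.congr
        ((by fun_prop : Continuous fun s => (p / Real.exp 1) ^ p * s).continuousWithinAt)
        (fun s hs => ?_) (by simp [hpDeriv])
      simp [hpDeriv, Set.mem_Iic.mp hs]
    · refine ContinuousWithinAt.congr
        (((Real.continuousAt_log (Real.exp_pos p).ne').rpow_const
          (Or.inr hp0.le)).continuousWithinAt) (fun s hs => ?_)
          (by simp [hpDeriv, Real.log_exp, slope_eq hp0])
      rcases eq_or_lt_of_le (Set.mem_Ici.mp hs) with h | h
      · simp [hpDeriv, ← h, Real.log_exp, slope_eq hp0]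
      · simp [hpDeriv, not_le.2 h]
  · have : (fun s => Real.log s ^ p) =ᶠ[𝓝 t] hpDeriv p := by
      filter_upwards [Ioi_mem_nhds h] with s hs
      simp [hpDeriv, not_le.2 (Set.mem_Ioi.mp hs)]
    refine ContinuousAt.congr ?_ this
    exact (Real.continuousAt_log (lt_trans (Real.exp_pos p) h).ne').rpow_const (Or.inr hp0.le)

lemma hpDeriv_nonneg (hp0 : 0 < p) {t : ℝ} (ht : 0 ≤ t) : 0 ≤ hpDeriv p t := by
  unfold hpDeriv
  split_ifs with h
  · positivity
  · have : (0:ℝ) < Real.log t := lt_of_lt_of_le hp0 (by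
      rw [← Real.log_exp p]
      exact Real.log_le_log (Real.exp_pos p) (not_le.mp h).le)
    positivity

lemma hpDeriv_mono (hp0 : 0 < p) : MonotoneOn (hpDeriv p) (Set.Ici 0) := by
  intro a ha b hb hab
  unfold hpDeriv
  split_ifs with h1 h2 h2
  · have : (0:ℝ) ≤ (p / Real.exp 1) ^ p := by positivity
    exact mul_le_mul_of_nonneg_left hab this
  · calc (p / Real.exp 1) ^ p * a ≤ (p / Real.exp 1) ^ p * Real.exp p := by
          have : (0:ℝ) ≤ (p / Real.exp 1) ^ p := by positivity
          exact mul_le_mul_of_nonneg_left h1 this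
      _ = p ^ p := slope_eq hp0
      _ ≤ Real.log b ^ p := by
        apply Real.rpow_le_rpow hp0.le _ hp0.le
        rw [← Real.log_exp p]
        exact Real.log_le_log (Real.exp_pos p) (not_le.mp h2).le
  · exact absurd (hab.trans h2) h1
  · apply Real.rpow_le_rpow _ _ hp0.le
    · have := Real.log_le_log (Real.exp_pos p) (not_le.mp h1).le
      rw [Real.log_exp] at this
      exact hp0.le.trans this
    · exact Real.log_le_log (lt_of_lt_of_le (Real.exp_pos p) (not_le.mp h1).le) hab

lemma hp_hasDerivAt (hp0 : 0 < p) (x : ℝ) : HasDerivAt (hp p) (hpDeriv p x) x :=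
  ((hpDeriv_continuous hp0).integral_hasStrictDerivAt 0 x).hasDerivAt

/-- The derivative of `hpDeriv`. -/
def hpD (p x : ℝ) : ℝ :=
  if x ≤ Real.exp p then (p / Real.exp 1) ^ p else p * Real.log x ^ (p - 1) / x

lemma hpD_boundary (hp0 : 0 < p) :
    p * Real.log (Real.exp p) ^ (p - 1) / Real.exp p = (p / Real.exp 1) ^ p := by
  rw [Real.log_exp, Real.div_rpow hp0.le (Real.exp_pos 1).le, Real.exp_one_rpow]
  congr 1
  rw [mul_comm, ← Real.rpow_add_one hp0.ne']
  norm_num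

lemma key_ineq (hp0 : 0 < p) {u v : ℝ} (hu : p ≤ u) (huv : u ≤ v) :
    (p - 1) * (Real.log v - Real.log u) ≤ v - u := by
  have hu0 : 0 < u := lt_of_lt_of_le hp0 hu
  have hv0 : 0 < v := lt_of_lt_of_le hu0 huv
  have hlog : Real.log v - Real.log u ≤ (v - u) / u := by
    rw [← Real.log_div hv0.ne' hu0.ne']
    have := Real.log_le_sub_one_of_pos (by positivity : (0:ℝ) < v / u)
    have h2 : v / u - 1 = (v - u) / u := by field_simp
    linarith [h2 ▸ this]
  rcases le_or_gt p 1 with h | h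
  · calc (p - 1) * (Real.log v - Real.log u) ≤ 0 :=
          mul_nonpos_of_nonpos_of_nonneg (by linarith)
            (by linarith [Real.log_le_log hu0 huv])
      _ ≤ v - u := by linarith
  · calc (p - 1) * (Real.log v - Real.log u) ≤ (p - 1) * ((v - u) / u) := by
          apply mul_le_mul_of_nonneg_left hlog (by linarith)
      _ ≤ 1 * (v - u) := by
          rw [mul_div_assoc', div_le_iff₀ hu0]
          nlinarith
      _ = v - u := one_mul _

lemma aux_anti (hp0 : 0 < p) :
    AntitoneOn (fun t => p * Real.log t ^ (p - 1) / t) (Set.Ici (Real.exp p)) := by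
  intro a ha b hb hab
  have ha0 : 0 < a := lt_of_lt_of_le (Real.exp_pos p) ha
  have hb0 : 0 < b := lt_of_lt_of_le ha0 hab
  have hu : p ≤ Real.log a := by
    have := Real.log_le_log (Real.exp_pos p) ha; rwa [Real.log_exp] at this
  have huv : Real.log a ≤ Real.log b := Real.log_le_log ha0 hab
  have hu0 : 0 < Real.log a := lt_of_lt_of_le hp0 hu
  have hv0 : 0 < Real.log b := lt_of_lt_of_le hu0 huv
  have key := key_ineq hp0 hu huv
  have e : ∀ t : ℝ, 0 < t → 0 < Real.log t →
      p * Real.log t ^ (p - 1) / t = p * Real.exp (Real.log (Real.log t) * (p - 1) - Real.log t) := by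
    intro t ht hlt
    rw [Real.rpow_def_of_pos hlt, Real.exp_sub, Real.exp_log ht, mul_div_assoc]
  simp only [e a ha0 hu0, e b hb0 hv0]
  apply mul_le_mul_of_nonneg_left _ hp0.le
  apply Real.exp_le_exp.mpr
  have hlu : Real.log (Real.log a) ≤ Real.log (Real.log b) := Real.log_le_log hu0 huv
  nlinarith [key]

lemma hpD_anti (hp0 : 0 < p) : AntitoneOn (hpD p) (Set.Ioi 0) := by
  intro a ha b hb hab
  unfold hpD
  split_ifs with h1 h2 h2
  · exact le_refl _
  · exact absurd (hab.trans h1) h2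
  · calc p * Real.log b ^ (p - 1) / b ≤
        p * Real.log (Real.exp p) ^ (p - 1) / Real.exp p :=
          aux_anti hp0 Set.self_mem_Ici (Set.mem_Ici.mpr (not_le.mp h1).le) (not_le.mp h1).le
      _ = (p / Real.exp 1) ^ p := hpD_boundary hp0
  · exact aux_anti hp0 (Set.mem_Ici.mpr (not_le.mp h2).le) (Set.mem_Ici.mpr (not_le.mp h1).le) hab

lemma log_pos_of_exp_le (hp0 : 0 < p) {x : ℝ} (hx : Real.exp p ≤ x) : p ≤ Real.log x := by
  have := Real.log_le_log (Real.exp_pos p) hx; rwa [Real.log_exp] at this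

lemma hasDerivAt_logrpow (hp0 : 0 < p) {x : ℝ} (hx : Real.exp p ≤ x) :
    HasDerivAt (fun s => Real.log s ^ p) (p * Real.log x ^ (p - 1) / x) x := by
  have hx0 : 0 < x := lt_of_lt_of_le (Real.exp_pos p) hx
  have hl : p ≤ Real.log x := log_pos_of_exp_le hp0 hx
  have := (Real.hasDerivAt_log hx0.ne').rpow_const
    (p := p) (Or.inl (lt_of_lt_of_le hp0 hl).ne')
  convert this using 1
  field_simp

lemma hpDeriv_hasDerivAt (hp0 : 0 < p) {x : ℝ} (hx : 0 < x) :
    HasDerivAt (hpDeriv p) (hpD p x) x := by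
  rcases lt_trichotomy x (Real.exp p) with h | h | h
  · have hd : HasDerivAt (fun s => (p / Real.exp 1) ^ p * s) ((p / Real.exp 1) ^ p) x := by
      simpa using (hasDerivAt_id x).const_mul ((p / Real.exp 1) ^ p)
    rw [hpD, if_pos h.le]
    apply hd.congr_of_eventuallyEq
    filter_upwards [Iio_mem_nhds h] with s hs
    simp [hpDeriv, (Set.mem_Iio.mp hs).le]
  · subst h
    rw [hpD, if_pos le_rfl]
    rw [← hasDerivWithinAt_univ, ← Set.Iic_union_Ici (a := Real.exp p)]
    apply HasDerivWithinAt.union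
    · have hd : HasDerivAt (fun s => (p / Real.exp 1) ^ p * s) ((p / Real.exp 1) ^ p)
          (Real.exp p) := by
        simpa using (hasDerivAt_id (Real.exp p)).const_mul ((p / Real.exp 1) ^ p)
      exact hd.hasDerivWithinAt.congr (fun s hs => by simp [hpDeriv, Set.mem_Iic.mp hs])
        (by simp [hpDeriv])
    · have hd := (hasDerivAt_logrpow hp0 (le_refl (Real.exp p))).hasDerivWithinAt
        (s := Set.Ici (Real.exp p))
      rw [hpD_boundary hp0] at hd
      refine hd.congr (fun s hs => ?_) (by simp [hpDeriv, Real.log_exp, slope_eq hp0])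
      rcases eq_or_lt_of_le (Set.mem_Ici.mp hs) with h | h
      · simp [hpDeriv, ← h, Real.log_exp, slope_eq hp0]
      · simp [hpDeriv, not_le.2 h]
  · rw [hpD, if_neg (not_le.mpr h)]
    apply (hasDerivAt_logrpow hp0 h.le).congr_of_eventuallyEq
    filter_upwards [Ioi_mem_nhds h] with s hs
    simp [hpDeriv, not_le.2 (Set.mem_Ioi.mp hs)]

lemma hp_convexOn (hp0 : 0 < p) : ConvexOn ℝ (Set.Ici 0) (hp p) := by
  apply MonotoneOn.convexOn_of_deriv (convex_Ici 0)
  · exact fun x _ => (hp_hasDerivAt hp0 x).continuousAt.continuousWithinAt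
  · exact fun x _ => (hp_hasDerivAt hp0 x).differentiableAt.differentiableWithinAt
  · intro a ha b hb hab
    rw [(hp_hasDerivAt hp0 a).deriv, (hp_hasDerivAt hp0 b).deriv]
    rw [interior_Ici] at ha hb
    exact hpDeriv_mono hp0 (Set.mem_Ici.mpr (le_of_lt ha)) (Set.mem_Ici.mpr (le_of_lt hb)) hab

lemma hpDeriv_concaveOn (hp0 : 0 < p) : ConcaveOn ℝ (Set.Ici 0) (hpDeriv p) := by
  apply AntitoneOn.concaveOn_of_deriv (convex_Ici 0) ((hpDeriv_continuous hp0).continuousOn)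
  · intro x hx
    rw [interior_Ici] at hx
    exact (hpDeriv_hasDerivAt hp0 hx).differentiableAt.differentiableWithinAt
  · intro a ha b hb hab
    rw [interior_Ici] at ha hb
    rw [(hpDeriv_hasDerivAt hp0 ha).deriv, (hpDeriv_hasDerivAt hp0 hb).deriv]
    exact hpD_anti hp0 ha hb hab

lemma hp_le_mul (hp0 : 0 < p) {x : ℝ} (hx : 0 ≤ x) : hp p x ≤ x * hpDeriv p x := by
  unfold hp
  calc ∫ t in (0:ℝ)..x, hpDeriv p t ≤ ∫ t in (0:ℝ)..x, hpDeriv p x := by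
        apply intervalIntegral.integral_mono_on hx
          ((hpDeriv_continuous hp0).intervalIntegrable _ _) intervalIntegrable_const
        intro t ht
        exact hpDeriv_mono hp0 (Set.mem_Ici.mpr ht.1) (Set.mem_Ici.mpr hx) ht.2
    _ = x * hpDeriv p x := by simp

lemma hp_bound (hp0 : 0 < p) {x : ℝ} (hx : 0 ≤ x) :
    hp p x ≤ (p ^ p + 1) * fp p x := by
  have hplog : 0 ≤ plog x := le_max_right _ _
  have h1 : hpDeriv p x ≤ (p ^ p + 1) * (1 + plog x ^ p) := by
    have hplogp : 0 ≤ plog x ^ p := Real.rpow_nonneg hplog p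
    have hpp : 0 ≤ p ^ p := Real.rpow_nonneg hp0.le p
    unfold hpDeriv
    split_ifs with h
    · have : (p / Real.exp 1) ^ p * x ≤ p ^ p := by
        rw [← slope_eq hp0]
        exact mul_le_mul_of_nonneg_left h (by positivity)
      nlinarith
    · have hlx : p ≤ Real.log x := log_pos_of_exp_le hp0 (not_le.mp h).le
      have : Real.log x ^ p = plog x ^ p := by
        rw [plog, max_eq_left (hp0.le.trans hlx)]
      rw [this]
      nlinarith
  calc hp p x ≤ x * hpDeriv p x := hp_le_mul hp0 hx
    _ ≤ x * ((p ^ p + 1) * (1 + plog x ^ p)) := mul_le_mul_of_nonneg_left h1 hx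
    _ = (p ^ p + 1) * fp p x := by rw [fp]; ring

lemma tendsto_div_log_atTop : Tendsto (fun x : ℝ => x / Real.log x) atTop atTop := by
  have h0 : Tendsto (fun x : ℝ => Real.log x / x) atTop (𝓝 0) := by
    simpa using Real.isLittleO_log_id_atTop.tendsto_div_nhds_zero
  have hpos : ∀ᶠ x : ℝ in atTop, 0 < Real.log x / x := by
    filter_upwards [eventually_gt_atTop 1] with x hx
    exact div_pos (Real.log_pos hx) (lt_trans one_pos hx)
  have := (tendsto_nhdsWithin_of_tendsto_nhds_of_eventually_within _ h0 hpos).inv_tendsto_nhdsGT_zero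
  apply this.congr
  intro x
  rw [Pi.inv_apply, inv_div]

lemma hp_ratio_tendsto (hp0 : 0 < p) :
    Tendsto (fun x => hp p x / (x * Real.log x ^ p)) atTop (𝓝 1) := by
  set L : ℝ → ℝ := fun x => Real.log x with hL
  -- lower comparison function
  set ℓ : ℝ → ℝ := fun x => (1 - (L x)⁻¹) * ((L x - Real.log (L x)) / L x) ^ p with hℓ
  have hℓtendsto : Tendsto ℓ atTop (𝓝 1) := by
    have h1 : Tendsto (fun x => 1 - (L x)⁻¹) atTop (𝓝 1) := by
      have : Tendsto (fun x => (L x)⁻¹) atTop (𝓝 0) :=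
        Real.tendsto_log_atTop.inv_tendsto_atTop
      simpa using (tendsto_const_nhds (x := (1:ℝ))).sub this
    have h2 : Tendsto (fun x => (L x - Real.log (L x)) / L x) atTop (𝓝 1) := by
      have hll : Tendsto (fun x => Real.log (L x) / L x) atTop (𝓝 0) :=
        (Real.isLittleO_log_id_atTop.tendsto_div_nhds_zero).comp Real.tendsto_log_atTop
      have : Tendsto (fun x => 1 - Real.log (L x) / L x) atTop (𝓝 1) := by
        simpa using (tendsto_const_nhds (x := (1:ℝ))).sub hll
      apply this.congr'
      filter_upwards [Real.tendsto_log_atTop.eventually_ge_atTop 1] with x hx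
      have hne : L x ≠ 0 := (lt_of_lt_of_le one_pos hx).ne'
      field_simp
    have h3 : Tendsto (fun x => ((L x - Real.log (L x)) / L x) ^ p) atTop (𝓝 1) := by
      have hc : ContinuousAt (fun y : ℝ => y ^ p) 1 :=
        Real.continuousAt_rpow_const 1 p (Or.inl one_ne_zero)
      have := hc.tendsto.comp h2
      simpa [Real.one_rpow, Function.comp_def] using this
    simpa using h1.mul h3
  -- the eventual bounds
  have hdiv := tendsto_div_log_atTop
  have hev : ∀ᶠ x : ℝ in atTop,
      ℓ x ≤ hp p x / (x * L x ^ p) ∧ hp p x / (x * L x ^ p) ≤ 1 := by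
    filter_upwards [eventually_gt_atTop (Real.exp p), eventually_gt_atTop 1,
      Real.tendsto_log_atTop.eventually_ge_atTop 1,
      hdiv.eventually_gt_atTop (Real.exp p)] with x hxe hx1 hlx hyx
    have hx0 : (0:ℝ) < x := lt_trans one_pos hx1
    have hL0 : 0 < L x := lt_of_lt_of_le one_pos hlx
    have hLp : 0 < L x ^ p := Real.rpow_pos_of_pos hL0 p
    have hD : 0 < x * L x ^ p := mul_pos hx0 hLp
    set y : ℝ := x / L x with hy
    have hy0 : 0 < y := lt_trans (Real.exp_pos p) hyx
    have hyxle : y ≤ x := div_le_self hx0.le hlx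
    have hlogy : Real.log y = L x - Real.log (L x) := Real.log_div hx0.ne' hL0.ne'
    have hply : p ≤ Real.log y := log_pos_of_exp_le hp0 hyx.le
    have hlogy0 : 0 < Real.log y := lt_of_lt_of_le hp0 hply
    constructor
    · -- lower bound
      have hsplit : (∫ t in (0:ℝ)..y, hpDeriv p t) + ∫ t in y..x, hpDeriv p t = hp p x :=
        intervalIntegral.integral_add_adjacent_intervals
          ((hpDeriv_continuous hp0).intervalIntegrable _ _)
          ((hpDeriv_continuous hp0).intervalIntegrable _ _)
      have h01 : 0 ≤ ∫ t in (0:ℝ)..y, hpDeriv p t := by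
        apply intervalIntegral.integral_nonneg hy0.le
        intro t ht
        exact hpDeriv_nonneg hp0 ht.1
      have h02 : (x - y) * Real.log y ^ p ≤ ∫ t in y..x, hpDeriv p t := by
        have hmono : ∀ t ∈ Set.Icc y x, (fun _ : ℝ => Real.log y ^ p) t ≤ hpDeriv p t := by
          intro t ht
          have h1 : hpDeriv p y ≤ hpDeriv p t :=
            hpDeriv_mono hp0 (Set.mem_Ici.mpr hy0.le)
              (Set.mem_Ici.mpr (hy0.le.trans ht.1)) ht.1
          have h2 : hpDeriv p y = Real.log y ^ p := by
            rw [hpDeriv, if_neg (not_le.mpr hyx)]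
          simpa [h2] using h1
        have := intervalIntegral.integral_mono_on (μ := MeasureTheory.volume) hyxle
          intervalIntegrable_const ((hpDeriv_continuous hp0).intervalIntegrable _ _) hmono
        simpa using this
      have hlower : (x - y) * Real.log y ^ p ≤ hp p x := by
        rw [← hsplit]; linarith
      rw [le_div_iff₀ hD]
      refine le_trans (le_of_eq ?_) hlower
      simp only [hℓ]
      rw [← hlogy, Real.div_rpow hlogy0.le hL0.le]
      have hLne : L x ≠ 0 := hL0.ne'
      have hLpne : L x ^ p ≠ 0 := hLp.ne'
      generalize Real.log y ^ p = B
      rw [hy]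
      field_simp
    · -- upper bound
      rw [div_le_one hD]
      calc hp p x ≤ x * hpDeriv p x := hp_le_mul hp0 hx0.le
        _ = x * L x ^ p := by rw [hpDeriv, if_neg (not_le.mpr hxe)]
  exact tendsto_of_tendsto_of_tendsto_of_le_of_le' hℓtendsto tendsto_const_nhds
    (hev.mono fun x h => h.1) (hev.mono fun x h => h.2)

lemma fp_ratio_tendsto (hp0 : 0 < p) :
    Tendsto (fun x => fp p x / (x * Real.log x ^ p)) atTop (𝓝 1) := by
  have hLp : Tendsto (fun x => Real.log x ^ p) atTop atTop :=
    (tendsto_rpow_atTop hp0).comp Real.tendsto_log_atTop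
  have h0 : Tendsto (fun x => (Real.log x ^ p)⁻¹ + 1) atTop (𝓝 1) := by
    simpa using hLp.inv_tendsto_atTop.add (tendsto_const_nhds (x := (1:ℝ)))
  apply h0.congr'
  filter_upwards [eventually_gt_atTop 1] with x hx
  have hx0 : 0 < x := lt_trans one_pos hx
  have hl0 : 0 < Real.log x := Real.log_pos hx
  have hlp : 0 < Real.log x ^ p := Real.rpow_pos_of_pos hl0 p
  have hplog : plog x = Real.log x := max_eq_left hl0.le
  rw [fp, hplog]
  field_simp


/-- For every `p > 0`: `h_p` is convex on `[0,∞)` with (concave) derivative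
`hpDeriv p`, `f_p(x)/h_p(x) → 1` as `x → ∞`, and there is `C_p > 0` with
`h_p(x) ≤ C_p f_p(x)` for all `x ≥ 0`. -/
theorem hp_properties (p : ℝ) (hp0 : 0 < p) :
    ConvexOn ℝ (Set.Ici 0) (hp p) ∧
    (∀ x : ℝ, 0 < x → HasDerivAt (hp p) (hpDeriv p x) x) ∧
    ConcaveOn ℝ (Set.Ici 0) (hpDeriv p) ∧
    Tendsto (fun x => fp p x / hp p x) atTop (𝓝 1) ∧
    ∃ C : ℝ, 0 < C ∧ ∀ x : ℝ, 0 ≤ x → hp p x ≤ C * fp p x := by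
  refine ⟨hp_convexOn hp0, fun x _ => hp_hasDerivAt hp0 x, hpDeriv_concaveOn hp0, ?_, ?_⟩
  · have h := (fp_ratio_tendsto hp0).div (hp_ratio_tendsto hp0) one_ne_zero
    have h1 : Tendsto (fun x =>
        (fp p x / (x * Real.log x ^ p)) / (hp p x / (x * Real.log x ^ p))) atTop (𝓝 1) := by
      simpa [Pi.div_def] using h
    apply h1.congr'
    have hpos := (hp_ratio_tendsto hp0).eventually (eventually_gt_nhds (by norm_num : (0:ℝ) < 1))
    filter_upwards [hpos, eventually_gt_atTop 1] with x hr hx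
    have hx0 : 0 < x := lt_trans one_pos hx
    have hl0 : 0 < Real.log x := Real.log_pos hx
    have hD : 0 < x * Real.log x ^ p := mul_pos hx0 (Real.rpow_pos_of_pos hl0 p)
    have hhp : 0 < hp p x := by
      rcases div_pos_iff.mp hr with ⟨h1, _⟩ | ⟨_, h2⟩
      · exact h1
      · exact absurd hD (not_lt.mpr h2.le)
    field_simp
  · exact ⟨p ^ p + 1, by positivity, fun x hx => hp_bound hp0 hx⟩
end
end

section
/- Let θ ≥ 0 with Φ(θ) < ∞. Then for every t ≥ 0, E[∑_{u∈I_t} e^{−θ S(u)}] = e^{tΦ(θ)}. -/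
/-!
Fix a node `u` of generation `n`. Its data `(A(u), E(u))` is independent of its weight
`W(u) = e^{-S(u)}` and birth time `σ(u)`, which are functions of the data at strictly shorter
nodes. Integrating out one generation at a time gives
`E[W(u)^θ f(σ(u))] = ∏_k m(u_k) · (Tⁿ f)(0)`, where `m(j) = E[A_j^θ]` and `T` is convolution with
the `Exp(1)` law. Taking `f(b) = P(b ≤ t < b + E) = 1{b ≤ t} e^{-(t-b)}`, `(Tⁿ f)(0)` is the Poisson
probability `e^{-t} tⁿ / n!`. Summing over the nodes of generation `n` gives
`(∑_j m(j))ⁿ = (1 + Φ(θ))ⁿ`, and summing the Poisson series gives `e^{-t} e^{t(1 + Φ(θ))}`.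
-/

open MeasureTheory ProbabilityTheory Filter
open scoped ENNReal Topology

noncomputable section

variable {Ω : Type*} [MeasurableSpace Ω]

/-- The characteristic function of a measure `μ` on `ℝ`. -/
def charFn (μ : Measure ℝ) (ξ : ℝ) : ℂ := ∫ x, Complex.exp (Complex.I * (ξ * x)) ∂μ

/-- The smoothing transform on the level of characteristic functions:
`Q̂(φ)(ξ) = E[∏_{j=1}^N φ(A_j ξ)]`.  Since `φ(0) = 1` for a characteristic
function `φ`, the (finite) product over `j = 1, …, N` coincides with the product
over those `j` with `A_j ≠ 0`. -/
def Qhat (A : ℕ → Ω → ℝ) (P : Measure Ω) (φ : ℝ → ℂ) (ξ : ℝ) : ℂ :=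
  ∫ ω, ∏ᶠ (j : ℕ) (_ : A j ω ≠ 0), φ (A j ω * ξ) ∂P

/-- `(μ_t)_{t ≥ 0}` is a solution of the kinetic-type evolution equation
`∂_t μ_t + μ_t = Q(μ_t)` with initial condition `μ0`, in the integrated form
`φ_t(ξ) = e^{−t} φ_0(ξ) + ∫_0^t e^{−s} Q̂(φ_{t−s})(ξ) ds`. -/
def IsKineticSolution (A : ℕ → Ω → ℝ) (P : Measure Ω) (μ0 : Measure ℝ)
    (μ : ℝ → Measure ℝ) : Prop :=
  μ 0 = μ0 ∧ (∀ t : ℝ, 0 ≤ t → IsProbabilityMeasure (μ t)) ∧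
    ∀ t : ℝ, 0 ≤ t → ∀ ξ : ℝ,
      charFn (μ t) ξ =
        (Real.exp (-t) : ℂ) * charFn μ0 ξ +
          ∫ s in Set.Ioc (0:ℝ) t, (Real.exp (-s) : ℂ) * Qhat A P (charFn (μ (t - s))) ξ

/-- `E[∑_{j ≥ 1} A_j^θ]` as an `ℝ≥0∞`-valued integral (the summands with `A_j = 0`
do not contribute). -/
def phiLin (A : ℕ → Ω → ℝ) (P : Measure Ω) (θ : ℝ) : ℝ≥0∞ :=
  ∫⁻ ω, ∑' j, ENNReal.ofReal (if A j ω = 0 then 0 else A j ω ^ θ) ∂P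

/-- The spectral function `Φ(θ) = E[∑_{j ≥ 1} A_j^θ] − 1`. -/
def Phi (A : ℕ → Ω → ℝ) (P : Measure Ω) (θ : ℝ) : ℝ := (phiLin A P θ).toReal - 1

/-- `μ ∈ M¹_γ(ℝ)`: probability measure with finite absolute moment of order `γ`,
centered if `γ > 1`. -/
def MemM1 (γ : ℝ) (μ : Measure ℝ) : Prop :=
  IsProbabilityMeasure μ ∧ (∫⁻ x, ENNReal.ofReal (|x| ^ γ) ∂μ) < ⊤ ∧
    (1 < γ → ∫ x, x ∂μ = 0)

/-! ### The continuous-time branching random walk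

Nodes of the Ulam–Harris tree are encoded as lists of naturals in *reversed* order:
`j :: v` is the `j`-th child of the node `v` (children indexed by `ℕ`), and `[]` is the root.
For a node `u`, `W u ω = e^{-S(u)(ω)}` is the multiplicative weight along the ancestral line
(`W u ω = 0` encodes `S(u) = ∞`), and `birth u ω = σ(u)(ω)` is the birth time. -/

/-- A node of the Ulam–Harris tree (coordinates in reversed order). -/
abbrev Node : Type := List ℕ

/-- `W u ω = e^{-S(u)(ω)}`, the product of the weights `A` along the ancestral line of `u`;
`W u ω = 0` if and only if `S(u)(ω) = ∞`. -/
def W (A : Node → ℕ → Ω → ℝ) : Node → Ω → ℝ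
  | [] => fun _ => 1
  | j :: v => fun ω => W A v ω * A v j ω

/-- The birth time `σ(u)`, the sum of the lifetimes of the strict ancestors of `u`. -/
def birth (Ep : Node → Ω → ℝ) : Node → Ω → ℝ
  | [] => fun _ => 0
  | _ :: v => fun ω => birth Ep v ω + Ep v ω

/-- `u ∈ I_t(ω)`: the individual `u` is alive at time `t`
(`S(u) < ∞`, `σ(u) ≤ t < σ(u) + E(u)`). -/
def memI (A : Node → ℕ → Ω → ℝ) (Ep : Node → Ω → ℝ) (t : ℝ) (u : Node) (ω : Ω) : Prop :=
  W A u ω ≠ 0 ∧ birth Ep u ω ≤ t ∧ t < birth Ep u ω + Ep u ω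

open Classical in
/-- `U_t = ∑_{u ∈ I_t} e^{-S(u)} X_u`. -/
def Usum (A : Node → ℕ → Ω → ℝ) (Ep : Node → Ω → ℝ) (X : Node → Ω → ℝ)
    (t : ℝ) (ω : Ω) : ℝ :=
  ∑' u : Node, if memI A Ep t u ω then W A u ω * X u ω else 0

/-- Measurability and nonnegativity of the data attached to the nodes. -/
def MeasSetup (A : Node → ℕ → Ω → ℝ) (Ep : Node → Ω → ℝ) : Prop :=
  (∀ u j, Measurable (A u j)) ∧ (∀ u, Measurable (Ep u)) ∧ (∀ u j ω, 0 ≤ A u j ω)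

/-- The family `((A(u), E(u)))_{u ∈ I}` consists of i.i.d. copies of `(A, E)`
(the pair attached to the root), `E = E(∅)` is a unit-mean exponential random
variable, and `A` and `E` are independent. -/
def IIDCopies (P : Measure Ω) (A : Node → ℕ → Ω → ℝ) (Ep : Node → Ω → ℝ) : Prop :=
  iIndepFun
      (fun u ω => ((fun j => A u j ω, Ep u ω) : (ℕ → ℝ) × ℝ)) P ∧
    (∀ u : Node,
      IdentDistrib (fun ω => ((fun j => A u j ω, Ep u ω) : (ℕ → ℝ) × ℝ))
        (fun ω => ((fun j => A [] j ω, Ep [] ω) : (ℕ → ℝ) × ℝ)) P P) ∧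
    IndepFun (fun ω (j : ℕ) => A [] j ω) (Ep []) P ∧
    (∀ t : ℝ, 0 ≤ t → P {ω | t < Ep [] ω} = ENNReal.ofReal (Real.exp (-t)))

/-- The family `(X_u)_{u ∈ I}` consists of i.i.d. random variables with law `μ0`,
independent of the family `((A(u), E(u)))_{u ∈ I}`. -/
def XFamily (P : Measure Ω) (A : Node → ℕ → Ω → ℝ) (Ep : Node → Ω → ℝ)
    (X : Node → Ω → ℝ) (μ0 : Measure ℝ) : Prop :=
  (∀ u, Measurable (X u)) ∧ iIndepFun X P ∧
    (∀ u, P.map (X u) = μ0) ∧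
    IndepFun (fun ω (u : Node) => ((fun j => A u j ω, Ep u ω) : (ℕ → ℝ) × ℝ))
      (fun ω (u : Node) => X u ω) P

namespace BranchingRandomWalk

open Set Real
open scoped Nat

theorem lintegral_comp_prodMk_of_indepFun {β γ : Type*} [MeasurableSpace β] [MeasurableSpace γ]
    {P : Measure Ω} [IsFiniteMeasure P] {X : Ω → β} {Y : Ω → γ}
    (hX : Measurable X) (hY : Measurable Y) (hXY : IndepFun X Y P)
    {h : β × γ → ℝ≥0∞} (hh : Measurable h) :
    ∫⁻ ω, h (X ω, Y ω) ∂P = ∫⁻ ω, ∫⁻ y, h (X ω, y) ∂(P.map Y) ∂P := by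
  rw [← lintegral_map hh (hX.prodMk hY),
    (indepFun_iff_map_prod_eq_prod_map_map hX.aemeasurable hY.aemeasurable).mp hXY,
    lintegral_prod _ hh.aemeasurable, lintegral_map hh.lintegral_prod_right' hX]

instance : IsProbabilityMeasure (expMeasure 1) := isProbabilityMeasure_expMeasure one_pos

theorem map_eq_expMeasure_one {P : Measure Ω} [IsProbabilityMeasure P] {X : Ω → ℝ}
    (hX : Measurable X) (htail : ∀ t : ℝ, 0 ≤ t → P {ω | t < X ω} = ENNReal.ofReal (exp (-t))) :
    P.map X = expMeasure 1 := by
  have := Measure.isProbabilityMeasure_map (μ := P) hX.aemeasurable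
  have hcompl : ∀ x, X ⁻¹' Iic x = {ω | x < X ω}ᶜ := fun x => by ext; simp
  refine Measure.ext_of_Iic _ _ fun x => ?_
  rw [Measure.map_apply hX measurableSet_Iic, ← ofReal_cdf, cdf_expMeasure_eq one_pos, hcompl]
  split_ifs with hx
  · rw [prob_compl_eq_one_sub (measurableSet_lt measurable_const hX), htail x hx, one_mul,
      ENNReal.ofReal_sub _ (exp_nonneg _), ENNReal.ofReal_one]
  · rw [ENNReal.ofReal_zero]
    refine measure_mono_null (compl_subset_compl.mpr fun ω (h : 0 < X ω) => ?_)
      (prob_compl_eq_zero_iff (measurableSet_lt measurable_const hX) |>.mpr ?_)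
    · exact (not_le.mp hx).trans h
    · simp [htail 0 le_rfl]

theorem expMeasure_one_eq :
    expMeasure 1 = (volume.restrict (Ici 0)).withDensity fun s => ENNReal.ofReal (exp (-s)) := by
  rw [← withDensity_indicator measurableSet_Ici, expMeasure, gammaMeasure]
  congr 1
  ext s
  simp only [gammaPDF_eq, indicator, mem_Ici]
  split_ifs <;> simp

theorem expMeasure_one_Ioi {c : ℝ} (hc : 0 ≤ c) :
    expMeasure 1 (Ioi c) = ENNReal.ofReal (exp (-c)) := by
  rw [expMeasure_one_eq, withDensity_apply _ measurableSet_Ioi,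
    Measure.restrict_restrict measurableSet_Ioi, inter_eq_left.mpr (Ioi_subset_Ici hc),
    ← ofReal_integral_eq_lintegral_ofReal _ (ae_of_all _ fun _ => (exp_pos _).le),
    integral_exp_neg_Ioi]
  exact (by simpa using exp_neg_integrableOn_Ioi c one_pos :
    IntegrableOn (fun x : ℝ => exp (-x)) (Ioi c))

def expConv (f : ℝ → ℝ≥0∞) (b : ℝ) : ℝ≥0∞ := ∫⁻ s, f (b + s) ∂expMeasure 1

@[fun_prop]
theorem measurable_expConv {f : ℝ → ℝ≥0∞} (hf : Measurable f) : Measurable (expConv f) :=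
  (hf.comp measurable_add).lintegral_prod_right'

/-- The probability that a unit-rate Poisson process has exactly `k` points in `(b, t]`. -/
def poissonWeight (t : ℝ) (k : ℕ) (b : ℝ) : ℝ≥0∞ :=
  if b ≤ t then ENNReal.ofReal (exp (-(t - b)) * (t - b) ^ k / k !) else 0

@[fun_prop]
theorem measurable_poissonWeight (t : ℝ) (k : ℕ) : Measurable (poissonWeight t k) :=
  Measurable.ite measurableSet_Iic (by fun_prop) measurable_const

theorem integral_Icc_exp_mul_pow_div_factorial {c : ℝ} (hc : 0 ≤ c) (k : ℕ) :
    ∫ s in Icc 0 c, exp (-c) * (c - s) ^ k / k ! = exp (-c) * c ^ (k + 1) / (k + 1)! := by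
  rw [integral_Icc_eq_integral_Ioc, ← intervalIntegral.integral_of_le hc]
  simp_rw [mul_div_right_comm _ _ ((k ! : ℝ)), intervalIntegral.integral_const_mul]
  rw [intervalIntegral.integral_comp_sub_left (fun x => x ^ k) c, sub_self, sub_zero,
    integral_pow, zero_pow k.succ_ne_zero, sub_zero, Nat.factorial_succ]
  push_cast
  field_simp

theorem expConv_poissonWeight (t : ℝ) (k : ℕ) :
    expConv (poissonWeight t k) = poissonWeight t (k + 1) := by
  ext b
  set c := t - b with hc
  have hpt : ∀ s ∈ Ici (0 : ℝ), ENNReal.ofReal (exp (-s)) * poissonWeight t k (b + s) =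
      (Iic c).indicator (fun s => ENNReal.ofReal (exp (-c) * (c - s) ^ k / k !)) s := by
    intro s _
    by_cases hs : s ≤ c
    · rw [poissonWeight, if_pos (by linarith), indicator_of_mem (show s ∈ Iic c from hs),
        ← ENNReal.ofReal_mul (exp_pos _).le, show t - (b + s) = c - s by ring, ← mul_div_assoc,
        ← mul_assoc, ← exp_add, show -s + -(c - s) = -c by ring]
    · rw [poissonWeight, if_neg (by linarith), indicator_of_notMem (show s ∉ Iic c from hs),
        mul_zero]
  rw [expConv, expMeasure_one_eq, lintegral_withDensity_eq_lintegral_mul _ (by fun_prop)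
      (show Measurable fun s => poissonWeight t k (b + s) by fun_prop)]
  simp only [Pi.mul_apply]
  rw [setLIntegral_congr_fun measurableSet_Ici hpt, lintegral_indicator measurableSet_Iic,
    Measure.restrict_restrict measurableSet_Iic, Iic_inter_Ici, poissonWeight]
  split_ifs with hb
  · have hc0 : 0 ≤ c := by linarith
    rw [← ofReal_integral_eq_lintegral_ofReal, integral_Icc_exp_mul_pow_div_factorial hc0]
    · exact Continuous.integrableOn_Icc (by fun_prop)
    · refine (ae_restrict_iff' measurableSet_Icc).mpr (ae_of_all _ fun s hs => ?_)
      have : 0 ≤ c - s := by linarith [hs.2]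
      positivity
  · rw [Icc_eq_empty (by linarith), Measure.restrict_empty, lintegral_zero_measure]

theorem expConv_iterate_poissonWeight (t : ℝ) (n : ℕ) :
    expConv^[n] (poissonWeight t 0) = poissonWeight t n := by
  induction n with
  | zero => rfl
  | succ n ih => rw [Function.iterate_succ_apply', ih, expConv_poissonWeight]

theorem measurableSet_alive (t : ℝ) : MeasurableSet {p : ℝ × ℝ | p.1 ≤ t ∧ t < p.1 + p.2} :=
  (measurableSet_le measurable_fst measurable_const).inter
    (measurableSet_lt measurable_const (measurable_fst.add measurable_snd))

theorem lintegral_alive_expMeasure_one (t b : ℝ) :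
    ∫⁻ e, (if b ≤ t ∧ t < b + e then 1 else 0) ∂expMeasure 1 = poissonWeight t 0 b := by
  by_cases hb : b ≤ t
  · have hind : (fun e => if b ≤ t ∧ t < b + e then (1 : ℝ≥0∞) else 0) =
        (Ioi (t - b)).indicator 1 := by
      ext e
      simp [indicator, hb, sub_lt_iff_lt_add']
    rw [hind, lintegral_indicator_one measurableSet_Ioi, expMeasure_one_Ioi (by linarith),
      poissonWeight, if_pos hb]
    simp
  · simp [hb, poissonWeight]

theorem tsum_fin_pi_prod {α : Type*} (m : α → ℝ≥0∞) (n : ℕ) :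
    ∑' f : Fin n → α, ∏ i, m (f i) = (∑' a, m a) ^ n := by
  induction n with
  | zero => simp
  | succ n ih =>
    rw [← (Fin.consEquiv fun _ => α).tsum_eq, ENNReal.tsum_prod', pow_succ', ← ih,
      ← ENNReal.tsum_mul_right]
    refine tsum_congr fun a => ?_
    rw [← ENNReal.tsum_mul_left]
    refine tsum_congr fun f => ?_
    simp [Fin.prod_univ_succ]

theorem tsum_list_prod_map_mul {α : Type*} (m : α → ℝ≥0∞) (c : ℕ → ℝ≥0∞) :
    ∑' l : List α, (l.map m).prod * c l.length = ∑' n, (∑' a, m a) ^ n * c n := by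
  rw [← List.equivSigmaTuple.symm.tsum_eq, ENNReal.tsum_sigma']
  refine tsum_congr fun n => ?_
  simp only [List.equivSigmaTuple, Equiv.coe_fn_symm_mk, List.length_ofFn, List.map_ofFn,
    List.prod_ofFn, Function.comp_apply]
  rw [ENNReal.tsum_mul_right, tsum_fin_pi_prod]

theorem tsum_pow_mul_poisson {a : ℝ≥0∞} (ha : a ≠ ⊤) {t : ℝ} (ht : 0 ≤ t) :
    ∑' n : ℕ, a ^ n * ENNReal.ofReal (exp (-t) * t ^ n / n !) =
      ENNReal.ofReal (exp (t * (a.toReal - 1))) := by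
  have hterm : ∀ n : ℕ, a ^ n * ENNReal.ofReal (exp (-t) * t ^ n / n !) =
      ENNReal.ofReal (exp (-t) * ((a.toReal * t) ^ n / n !)) := fun n => by
    rw [← ENNReal.ofReal_toReal ha, ← ENNReal.ofReal_pow ENNReal.toReal_nonneg,
      ← ENNReal.ofReal_mul (by positivity), ENNReal.toReal_ofReal ENNReal.toReal_nonneg]
    congr 1
    ring
  simp_rw [hterm]
  rw [← ENNReal.ofReal_tsum_of_nonneg (fun n => by positivity)
      ((Real.summable_pow_div_factorial _).mul_left _), tsum_mul_left,
    ← congrFun (Real.exp_eq_exp_ℝ.trans NormedSpace.exp_eq_tsum_div), ← exp_add]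
  congr 2
  ring

/-- `x ^ θ` with `0 ↦ 0` even for `θ = 0`: a zero weight marks an individual with `S(u) = ∞`. -/
def weightPow (θ x : ℝ) : ℝ≥0∞ := if x = 0 then 0 else ENNReal.ofReal (x ^ θ)

@[fun_prop]
theorem measurable_weightPow (θ : ℝ) : Measurable (weightPow θ) :=
  Measurable.ite (measurableSet_singleton 0) measurable_const (by fun_prop)

theorem weightPow_mul (θ : ℝ) {x y : ℝ} (hx : 0 ≤ x) (hy : 0 ≤ y) :
    weightPow θ (x * y) = weightPow θ x * weightPow θ y := by
  by_cases hx0 : x = 0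
  · simp [weightPow, hx0]
  by_cases hy0 : y = 0
  · simp [weightPow, hy0]
  rw [weightPow, weightPow, weightPow, if_neg (mul_ne_zero hx0 hy0), if_neg hx0, if_neg hy0,
    mul_rpow hx hy, ENNReal.ofReal_mul (rpow_nonneg hx θ)]

def meanWeight (A : ℕ → Ω → ℝ) (P : Measure Ω) (θ : ℝ) (j : ℕ) : ℝ≥0∞ :=
  ∫⁻ ω, weightPow θ (A j ω) ∂P

theorem tsum_meanWeight {A : ℕ → Ω → ℝ} (hA : ∀ j, Measurable (A j)) (P : Measure Ω) (θ : ℝ) :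
    ∑' j, meanWeight A P θ j = phiLin A P θ := by
  have hsummand : ∀ x : ℝ, ENNReal.ofReal (if x = 0 then 0 else x ^ θ) = weightPow θ x := by
    intro x
    rw [weightPow]
    split_ifs <;> simp
  simp_rw [phiLin, hsummand]
  exact (lintegral_tsum fun j => ((measurable_weightPow θ).comp (hA j)).aemeasurable).symm

def nodeData (A : Node → ℕ → Ω → ℝ) (Ep : Node → Ω → ℝ) (u : Node) (ω : Ω) : (ℕ → ℝ) × ℝ :=
  (fun j => A u j ω, Ep u ω)

abbrev generationsBelow {α : Type*} (A : Node → ℕ → α → ℝ) (Ep : Node → α → ℝ) (n : ℕ) :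
    MeasurableSpace α :=
  ⨆ w ∈ {w : Node | w.length < n}, MeasurableSpace.comap (nodeData A Ep w) inferInstance

theorem measurable_W_birth_of_length_le {α : Type*} {A : Node → ℕ → α → ℝ} {Ep : Node → α → ℝ}
    {n : ℕ} {u : Node} (hu : u.length ≤ n) :
    Measurable[generationsBelow A Ep n] fun ω => (W A u ω, birth Ep u ω) := by
  induction u with
  | nil => exact measurable_const (a := ((1 : ℝ), (0 : ℝ)))
  | cons j v ih =>
    have hv : Measurable[generationsBelow A Ep n] (nodeData A Ep v) :=
      Measurable.of_comap_le (le_iSup₂ (f := fun w (_ : w ∈ {w : Node | w.length < n}) =>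
        MeasurableSpace.comap (nodeData A Ep w) inferInstance) v (by simpa using hu))
    have ih := ih (by simp at hu; omega)
    exact (ih.fst.mul ((measurable_pi_apply j).comp hv.fst)).prodMk (ih.snd.add hv.snd)

section Tree

variable {A : Node → ℕ → Ω → ℝ} {Ep : Node → Ω → ℝ}

theorem measurable_nodeData (hmeas : MeasSetup A Ep) (u : Node) : Measurable (nodeData A Ep u) :=
  (measurable_pi_lambda _ fun j => hmeas.1 u j).prodMk (hmeas.2.1 u)

theorem measurable_W_birth (hmeas : MeasSetup A Ep) (u : Node) :
    Measurable fun ω => (W A u ω, birth Ep u ω) :=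
  (measurable_W_birth_of_length_le le_rfl).mono
    (iSup₂_le fun w _ => (measurable_nodeData hmeas w).comap_le) le_rfl

theorem measurableSet_memI (hmeas : MeasSetup A Ep) (t : ℝ) (u : Node) :
    MeasurableSet {ω | memI A Ep t u ω} :=
  ((measurable_W_birth hmeas u).fst (measurableSet_singleton 0)).compl.inter
    ((measurableSet_alive t).preimage ((measurable_W_birth hmeas u).snd.prodMk (hmeas.2.1 u)))

theorem W_nonneg (hmeas : MeasSetup A Ep) (u : Node) (ω : Ω) : 0 ≤ W A u ω := by
  induction u with
  | nil => exact zero_le_one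
  | cons j v ih => exact mul_nonneg ih (hmeas.2.2 v j ω)

theorem indepFun_nodeData_W_birth {P : Measure Ω} (hmeas : MeasSetup A Ep)
    (hind : iIndepFun (nodeData A Ep) P) (u : Node) :
    IndepFun (nodeData A Ep u) (fun ω => (W A u ω, birth Ep u ω)) P := by
  have h := indep_iSup_of_disjoint (fun w => (measurable_nodeData hmeas w).comap_le) hind.iIndep
    (S := {u}) (T := {w | w.length < u.length}) (by simp)
  rw [IndepFun_iff_Indep]
  exact indep_of_indep_of_le_right (indep_of_indep_of_le_left h (by simp))
    (measurable_W_birth_of_length_le le_rfl).comap_le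

variable {P : Measure Ω} [IsProbabilityMeasure P]

theorem map_nodeData (hmeas : MeasSetup A Ep) (hiid : IIDCopies P A Ep) (u : Node) :
    P.map (nodeData A Ep u) = (P.map fun ω j => A [] j ω).prod (expMeasure 1) := by
  have hA : Measurable fun ω j => A [] j ω := measurable_pi_lambda _ fun j => hmeas.1 [] j
  refine (hiid.2.1 u).map_eq.trans ?_
  rw [← map_eq_expMeasure_one (hmeas.2.1 []) hiid.2.2.2,
    ← (indepFun_iff_map_prod_eq_prod_map_map hA.aemeasurable
      (hmeas.2.1 []).aemeasurable).mp hiid.2.2.1]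

theorem lintegral_comp_W_birth_nodeData (hmeas : MeasSetup A Ep) (hiid : IIDCopies P A Ep)
    (u : Node) {h : (ℝ × ℝ) × ((ℕ → ℝ) × ℝ) → ℝ≥0∞} (hh : Measurable h) :
    ∫⁻ ω, h ((W A u ω, birth Ep u ω), nodeData A Ep u ω) ∂P =
      ∫⁻ ω, ∫⁻ z, h ((W A u ω, birth Ep u ω), z)
        ∂(P.map fun ω j => A [] j ω).prod (expMeasure 1) ∂P := by
  rw [← map_nodeData hmeas hiid u]
  exact lintegral_comp_prodMk_of_indepFun (measurable_W_birth hmeas u)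
    (measurable_nodeData hmeas u) (indepFun_nodeData_W_birth hmeas hiid.1 u).symm hh

theorem lintegral_weightPow_W_mul_birth (hmeas : MeasSetup A Ep) (hiid : IIDCopies P A Ep)
    (θ : ℝ) (u : Node) {f : ℝ → ℝ≥0∞} (hf : Measurable f) :
    ∫⁻ ω, weightPow θ (W A u ω) * f (birth Ep u ω) ∂P =
      (u.map (meanWeight (A []) P θ)).prod * expConv^[u.length] f 0 := by
  induction u generalizing f with
  | nil => simp [W, birth, weightPow]
  | cons j v ih =>
    have hW : Measurable (W A v) := (measurable_W_birth hmeas v).fst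
    have hb : Measurable (birth Ep v) := (measurable_W_birth hmeas v).snd
    have hAroot : Measurable fun ω j => A [] j ω := measurable_pi_lambda _ fun j => hmeas.1 [] j
    have hinner : ∀ w b : ℝ, ∫⁻ z, weightPow θ w * (weightPow θ (z.1 j) * f (b + z.2))
          ∂(P.map fun ω j => A [] j ω).prod (expMeasure 1) =
        weightPow θ w * (meanWeight (A []) P θ j * expConv f b) := by
      intro w b
      rw [lintegral_const_mul _ (by fun_prop),
        lintegral_prod_mul (f := fun a : ℕ → ℝ => weightPow θ (a j)) (g := fun e => f (b + e))
          (Measurable.aemeasurable (by fun_prop)) (Measurable.aemeasurable (by fun_prop)),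
        lintegral_map (by fun_prop) hAroot]
      rfl
    calc ∫⁻ ω, weightPow θ (W A (j :: v) ω) * f (birth Ep (j :: v) ω) ∂P
        = ∫⁻ ω, weightPow θ (W A v ω) *
            (weightPow θ (A v j ω) * f (birth Ep v ω + Ep v ω)) ∂P := by
          simp only [W, birth, weightPow_mul θ (W_nonneg hmeas v _) (hmeas.2.2 v j _), mul_assoc]
      _ = ∫⁻ ω, ∫⁻ z, weightPow θ (W A v ω) * (weightPow θ (z.1 j) * f (birth Ep v ω + z.2))
            ∂(P.map fun ω j => A [] j ω).prod (expMeasure 1) ∂P :=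
          lintegral_comp_W_birth_nodeData hmeas hiid v
            (h := fun p => weightPow θ p.1.1 * (weightPow θ (p.2.1 j) * f (p.1.2 + p.2.2)))
            (by fun_prop)
      _ = meanWeight (A []) P θ j *
            ∫⁻ ω, weightPow θ (W A v ω) * expConv f (birth Ep v ω) ∂P := by
          simp_rw [hinner, mul_left_comm _ (meanWeight _ _ _ j)]
          exact lintegral_const_mul _ (by fun_prop)
      _ = ((j :: v).map (meanWeight (A []) P θ)).prod * expConv^[(j :: v).length] f 0 := by
          rw [ih (measurable_expConv hf)]
          simp [Function.iterate_succ_apply, mul_assoc]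

open Classical in
theorem lintegral_alive (hmeas : MeasSetup A Ep) (hiid : IIDCopies P A Ep) (θ : ℝ) {t : ℝ}
    (ht : 0 ≤ t) (u : Node) :
    ∫⁻ ω, (if memI A Ep t u ω then ENNReal.ofReal (W A u ω ^ θ) else 0) ∂P =
      (u.map (meanWeight (A []) P θ)).prod *
        ENNReal.ofReal (exp (-t) * t ^ u.length / u.length !) := by
  have hAroot : Measurable fun ω j => A [] j ω := measurable_pi_lambda _ fun j => hmeas.1 [] j
  have := Measure.isProbabilityMeasure_map (μ := P) hAroot.aemeasurable
  have halive : ∀ b, Measurable fun e : ℝ => if b ≤ t ∧ t < b + e then (1 : ℝ≥0∞) else 0 :=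
    fun b => Measurable.ite (measurableSet_alive t |>.preimage measurable_prodMk_left)
      measurable_const measurable_const
  calc ∫⁻ ω, (if memI A Ep t u ω then ENNReal.ofReal (W A u ω ^ θ) else 0) ∂P
      = ∫⁻ ω, weightPow θ (W A u ω) *
          (if birth Ep u ω ≤ t ∧ t < birth Ep u ω + Ep u ω then 1 else 0) ∂P := by
        refine lintegral_congr fun ω => ?_
        by_cases hW0 : W A u ω = 0 <;> simp [memI, weightPow, hW0]
    _ = ∫⁻ ω, ∫⁻ z, weightPow θ (W A u ω) *
          (if birth Ep u ω ≤ t ∧ t < birth Ep u ω + z.2 then 1 else 0)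
          ∂(P.map fun ω j => A [] j ω).prod (expMeasure 1) ∂P :=
        lintegral_comp_W_birth_nodeData hmeas hiid u
          (h := fun p => weightPow θ p.1.1 * (if p.1.2 ≤ t ∧ t < p.1.2 + p.2.2 then 1 else 0))
          ((measurable_weightPow θ).comp measurable_fst.fst |>.mul <|
            Measurable.ite ((measurableSet_alive t).preimage
              (measurable_fst.snd.prodMk measurable_snd.snd)) measurable_const measurable_const)
    _ = ∫⁻ ω, weightPow θ (W A u ω) * poissonWeight t 0 (birth Ep u ω) ∂P := by
        refine lintegral_congr fun ω =>
          (lintegral_const_mul _ ((halive _).comp measurable_snd)).trans ?_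
        exact congrArg _ ((measurePreserving_snd.lintegral_comp (halive _)).trans
          (lintegral_alive_expMeasure_one t _))
    _ = _ := by
        rw [lintegral_weightPow_W_mul_birth hmeas hiid θ u (measurable_poissonWeight t 0),
          expConv_iterate_poissonWeight, poissonWeight, if_pos ht]
        simp

end Tree

end BranchingRandomWalk

open BranchingRandomWalk

open Classical in
theorem intensity_laplace_general (P : Measure Ω) [IsProbabilityMeasure P]
    (A : Node → ℕ → Ω → ℝ) (Ep : Node → Ω → ℝ)
    (hmeas : MeasSetup A Ep) (hiid : IIDCopies P A Ep)
    (θ : ℝ) (hΦ : phiLin (A []) P θ < ⊤) :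
    ∀ t : ℝ, 0 ≤ t →
      ∫⁻ ω, ∑' u : Node,
          (if memI A Ep t u ω then ENNReal.ofReal (W A u ω ^ θ) else 0) ∂P =
        ENNReal.ofReal (Real.exp (t * Phi (A []) P θ)) := by
  intro t ht
  have hW : ∀ u, Measurable (W A u) := fun u => (measurable_W_birth hmeas u).fst
  rw [lintegral_tsum fun u => (Measurable.ite (measurableSet_memI hmeas t u)
      (by fun_prop) measurable_const).aemeasurable]
  simp_rw [lintegral_alive hmeas hiid θ ht]
  rw [tsum_list_prod_map_mul _ fun n => ENNReal.ofReal (Real.exp (-t) * t ^ n / n.factorial),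
    tsum_meanWeight (hmeas.1 []), tsum_pow_mul_poisson hΦ.ne ht, Phi]

open Classical in
/-- if `Φ(θ) < ∞` then the Laplace transform of the intensity of the
branching random walk satisfies `E[∑_{u ∈ I_t} e^{−θ S(u)}] = e^{t Φ(θ)}` for all `t ≥ 0`. -/
theorem intensity_laplace (P : Measure Ω) [IsProbabilityMeasure P]
    (A : Node → ℕ → Ω → ℝ) (Ep : Node → Ω → ℝ)
    (hmeas : MeasSetup A Ep) (hiid : IIDCopies P A Ep)
    (hN : ∀ᵐ ω ∂P, {j | A [] j ω ≠ 0}.Finite)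
    (θ : ℝ) (hθ : 0 ≤ θ) (hΦ : phiLin (A []) P θ < ⊤) :
    ∀ t : ℝ, 0 ≤ t →
      ∫⁻ ω, ∑' u : Node,
          (if memI A Ep t u ω then ENNReal.ofReal (W A u ω ^ θ) else 0) ∂P =
        ENNReal.ofReal (Real.exp (t * Phi (A []) P θ)) :=
  intensity_laplace_general P A Ep hmeas hiid θ hΦ
end
end

section
/- Let 0 < ϑ < r ≤ 2. Let (P_k)_{k≥1} be a nondecreasing sequence of real random variables satisfying ∑_{k≥1} e^{−β P_k} < ∞ almost surely for every β > 1, and let (X_k)_{k≥1} be i.i.d. real random variables with common law in M¹_r(ℝ), independent of (P_k)_{k≥1}. Then the partial sums Z_n* := ∑_{k=1}^n e^{−P_k/ϑ} X_k converge in probability as n → ∞ to some random variable Z. -/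
open MeasureTheory ProbabilityTheory Filter
open scoped ENNReal Topology

noncomputable section

namespace AuxPf

/-- truncation of `t * x` at level 1 -/
def trunc (t : ℝ) (x : ℝ) : ℝ := if |t * x| ≤ 1 then t * x else 0

lemma trunc_meas (t : ℝ) : Measurable (trunc t) := by
  unfold trunc
  exact Measurable.ite
    (measurableSet_le ((measurable_const.mul measurable_id).abs) measurable_const)
    (measurable_const.mul measurable_id) measurable_const

lemma abs_trunc_le_one (t x : ℝ) : |trunc t x| ≤ 1 := by
  unfold trunc; split
  · assumption
  · simp

lemma sq_trunc_le {r : ℝ} (hr0 : 0 < r) (hr2 : r ≤ 2) (t x : ℝ) :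
    (trunc t x) ^ 2 ≤ |t * x| ^ r := by
  unfold trunc; split
  · rename_i h
    rcases eq_or_lt_of_le (abs_nonneg (t * x)) with h0 | h0
    · have : t * x = 0 := abs_eq_zero.mp h0.symm
      simp [this, Real.zero_rpow hr0.ne']
    · have h2 : (t * x) ^ 2 = |t * x| ^ (2 : ℝ) := by
        rw [Real.rpow_two]; exact (sq_abs _).symm
      rw [h2]
      exact Real.rpow_le_rpow_of_exponent_ge h0 h hr2
  · have h := Real.rpow_nonneg (abs_nonneg (t * x)) r
    simpa using h

lemma abs_trunc_le_rpow {r : ℝ} (hr0 : 0 < r) (hr1 : r ≤ 1) (t x : ℝ) :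
    |trunc t x| ≤ |t * x| ^ r := by
  unfold trunc; split
  · rename_i h
    rcases eq_or_lt_of_le (abs_nonneg (t * x)) with h0 | h0
    · have : t * x = 0 := abs_eq_zero.mp h0.symm
      simp [this, Real.zero_rpow hr0.ne']
    · have h1 : |t * x| = |t * x| ^ (1 : ℝ) := by rw [Real.rpow_one]
      calc |t * x| = |t * x| ^ (1 : ℝ) := h1
        _ ≤ |t * x| ^ r := Real.rpow_le_rpow_of_exponent_ge h0 h hr1
  · simp; positivity

lemma abs_sub_trunc_le {r : ℝ} (hr1 : 1 ≤ r) (t x : ℝ) :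
    |t * x - trunc t x| ≤ |t * x| ^ r := by
  unfold trunc; split
  · simp; positivity
  · rename_i h
    push_neg at h
    rw [sub_zero]
    calc |t * x| = |t * x| ^ (1 : ℝ) := (Real.rpow_one _).symm
      _ ≤ |t * x| ^ r := Real.rpow_le_rpow_of_exponent_le h.le hr1

lemma abs_mul_rpow {r t : ℝ} (ht : 0 ≤ t) (x : ℝ) : |t * x| ^ r = t ^ r * |x| ^ r := by
  rw [abs_mul, abs_of_nonneg ht, Real.mul_rpow ht (abs_nonneg x)]

end AuxPf

namespace AuxPf

variable {Ω : Type*} [MeasurableSpace Ω]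

lemma meas_abs_mul_rpow {r : ℝ} (hr0 : 0 ≤ r) (t : ℝ) :
    Measurable fun x : ℝ => |t * x| ^ r :=
  (Real.continuous_rpow_const hr0).measurable.comp ((measurable_const.mul measurable_id).abs)

lemma integrable_abs_mul_rpow {r : ℝ} {ν : Measure ℝ}
    (hmomI : Integrable (fun x => |x| ^ r) ν) (t : ℝ) (ht : 0 ≤ t) :
    Integrable (fun x => |t * x| ^ r) ν := by
  have := hmomI.const_mul (t ^ r)
  refine this.congr (ae_of_all _ fun x => (abs_mul_rpow ht x).symm)

lemma integrable_trunc {ν : Measure ℝ} [IsProbabilityMeasure ν] (t : ℝ) :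
    Integrable (trunc t) ν := by
  refine Integrable.mono' (integrable_const 1) (trunc_meas t).aestronglyMeasurable
    (ae_of_all _ fun x => ?_)
  rw [Real.norm_eq_abs]; exact abs_trunc_le_one t x

lemma integrable_trunc_sq {ν : Measure ℝ} [IsProbabilityMeasure ν] (t : ℝ) :
    Integrable (fun x => (trunc t x) ^ 2) ν := by
  refine Integrable.mono' (integrable_const 1) ((trunc_meas t).pow_const 2).aestronglyMeasurable
    (ae_of_all _ fun x => ?_)
  rw [Real.norm_eq_abs, abs_pow]
  calc |trunc t x| ^ 2 ≤ 1 ^ 2 := pow_le_pow_left₀ (abs_nonneg _) (abs_trunc_le_one t x) 2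
    _ = 1 := one_pow 2

lemma integrable_id' {r : ℝ} {ν : Measure ℝ} [IsProbabilityMeasure ν] (hr1 : 1 < r)
    (hmomI : Integrable (fun x => |x| ^ r) ν) : Integrable (fun x : ℝ => x) ν := by
  refine Integrable.mono' ((integrable_const 1).add hmomI)
    aestronglyMeasurable_id (ae_of_all _ fun x => ?_)
  simp only [Pi.add_apply]
  rw [Real.norm_eq_abs]
  rcases le_or_gt |x| 1 with h | h
  · have : (0:ℝ) ≤ |x| ^ r := Real.rpow_nonneg (abs_nonneg x) r
    linarith
  · have : |x| ≤ |x| ^ r := by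
      calc |x| = |x| ^ (1:ℝ) := (Real.rpow_one _).symm
        _ ≤ |x| ^ r := Real.rpow_le_rpow_of_exponent_le h.le hr1.le
    linarith

/-- Core estimate: tail bound for a weighted sum of iid centered variables. -/
lemma core_estimate (μ : Measure Ω) [IsProbabilityMeasure μ]
    {r : ℝ} (hr0 : 0 < r) (hr2 : r ≤ 2)
    (Y : ℕ → Ω → ℝ) (hY : ∀ k, Measurable (Y k))
    (ν : Measure ℝ) [IsProbabilityMeasure ν]
    (hiid : iIndepFun Y μ)
    (hlaw : ∀ k, μ.map (Y k) = ν)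
    (hmomI : Integrable (fun x => |x| ^ r) ν)
    (hcent : 1 < r → ∫ x, x ∂ν = 0)
    (c : ℕ → ℝ) (hc : ∀ k, 0 ≤ c k) (s : Finset ℕ) (ε : ℝ) (hε : 0 < ε) :
    μ {ω | ε ≤ |∑ k ∈ s, c k * Y k ω|} ≤
      ENNReal.ofReal ((1 + 4 / ε ^ 2 + 2 / ε) *
        ((∫ x, |x| ^ r ∂ν) * ∑ k ∈ s, c k ^ r)) := by
  set A := ∫ x, |x| ^ r ∂ν with hA
  have hA0 : 0 ≤ A := integral_nonneg fun x => Real.rpow_nonneg (abs_nonneg x) r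
  set T := A * ∑ k ∈ s, c k ^ r with hT
  have hsum0 : (0:ℝ) ≤ ∑ k ∈ s, c k ^ r :=
    Finset.sum_nonneg fun k _ => Real.rpow_nonneg (hc k) r
  have hT0 : 0 ≤ T := mul_nonneg hA0 hsum0
  -- per-k integral of |c k * x| ^ r
  have hIck : ∀ k : ℕ, Integrable (fun x => |c k * x| ^ r) ν :=
    fun k => integrable_abs_mul_rpow hmomI (c k) (hc k)
  have hintck : ∀ k : ℕ, ∫ x, |c k * x| ^ r ∂ν = c k ^ r * A := by
    intro k
    simp_rw [abs_mul_rpow (hc k)]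
    rw [integral_const_mul]
  -- (1) union bound pieces
  have key1 : ∀ k : ℕ, μ {ω | 1 < |c k * Y k ω|} ≤ ENNReal.ofReal (c k ^ r * A) := by
    intro k
    have hset : MeasurableSet {x : ℝ | 1 < |c k * x|} :=
      measurableSet_lt measurable_const ((measurable_const.mul measurable_id).abs)
    have hmap : μ {ω | 1 < |c k * Y k ω|} = ν {x | 1 < |c k * x|} := by
      rw [← hlaw k, Measure.map_apply (hY k) hset]; rfl
    rw [hmap, ← hintck k]
    have h1 : ν {x | 1 < |c k * x|} ≤ ∫⁻ x, ENNReal.ofReal (|c k * x| ^ r) ∂ν := by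
      have hsub : {x : ℝ | 1 < |c k * x|} ⊆
          {x : ℝ | 1 ≤ ENNReal.ofReal (|c k * x| ^ r)} := by
        intro x hx
        simp only [Set.mem_setOf_eq, ENNReal.one_le_ofReal]
        calc (1:ℝ) = 1 ^ r := (Real.one_rpow r).symm
          _ ≤ |c k * x| ^ r := Real.rpow_le_rpow zero_le_one hx.le hr0.le
      calc ν {x | 1 < |c k * x|} ≤ ν {x | 1 ≤ ENNReal.ofReal (|c k * x| ^ r)} :=
            measure_mono hsub
        _ = 1 * ν {x | 1 ≤ ENNReal.ofReal (|c k * x| ^ r)} := (one_mul _).symm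
        _ ≤ ∫⁻ x, ENNReal.ofReal (|c k * x| ^ r) ∂ν :=
            mul_meas_ge_le_lintegral₀
              ((meas_abs_mul_rpow hr0.le (c k)).ennreal_ofReal).aemeasurable 1
    calc ν {x | 1 < |c k * x|} ≤ ∫⁻ x, ENNReal.ofReal (|c k * x| ^ r) ∂ν := h1
      _ = ENNReal.ofReal (∫ x, |c k * x| ^ r ∂ν) :=
          (ofReal_integral_eq_lintegral_ofReal (hIck k)
            (ae_of_all _ fun x => Real.rpow_nonneg (abs_nonneg _) r)).symm
  -- truncated variables
  set G : ℕ → Ω → ℝ := fun k => trunc (c k) ∘ Y k with hGdef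
  have hGmeas : ∀ k, Measurable (G k) := fun k => (trunc_meas (c k)).comp (hY k)
  have hG2 : ∀ k, MemLp (G k) 2 μ := by
    intro k
    refine (memLp_top_of_bound (hGmeas k).aestronglyMeasurable 1
      (ae_of_all _ fun ω => ?_)).mono_exponent le_top
    rw [Real.norm_eq_abs]; exact abs_trunc_le_one _ _
  have hmapint : ∀ (k : ℕ) (f : ℝ → ℝ), Measurable f →
      ∫ ω, f (Y k ω) ∂μ = ∫ x, f x ∂ν := by
    intro k f hf
    rw [← hlaw k, integral_map (hY k).aemeasurable hf.aestronglyMeasurable]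
  have hvar : ∀ k, variance (G k) μ ≤ c k ^ r * A := by
    intro k
    have h1 : variance (G k) μ ≤ μ[(G k) ^ 2] :=
      variance_le_expectation_sq (hGmeas k).aestronglyMeasurable
    have h2 : μ[(G k) ^ 2] = ∫ x, (trunc (c k) x) ^ 2 ∂ν := by
      rw [show ((G k) ^ 2 : Ω → ℝ) = fun ω => (fun x => (trunc (c k) x) ^ 2) (Y k ω) from rfl]
      exact hmapint k _ ((trunc_meas (c k)).pow_const 2)
    have h3 : ∫ x, (trunc (c k) x) ^ 2 ∂ν ≤ ∫ x, |c k * x| ^ r ∂ν :=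
      integral_mono (integrable_trunc_sq _) (hIck k) (fun x => sq_trunc_le hr0 hr2 _ _)
    rw [h2] at h1
    calc variance (G k) μ ≤ ∫ x, |c k * x| ^ r ∂ν := le_trans h1 h3
      _ = c k ^ r * A := hintck k
  have hmean : ∀ k, |∫ ω, G k ω ∂μ| ≤ c k ^ r * A := by
    intro k
    have hEq : ∫ ω, G k ω ∂μ = ∫ x, trunc (c k) x ∂ν := hmapint k _ (trunc_meas _)
    rw [hEq]
    rcases le_or_gt r 1 with h1 | h1
    · calc |∫ x, trunc (c k) x ∂ν| ≤ ∫ x, |trunc (c k) x| ∂ν := by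
            simpa [Real.norm_eq_abs] using
              norm_integral_le_integral_norm (μ := ν) (trunc (c k))
        _ ≤ ∫ x, |c k * x| ^ r ∂ν := integral_mono (integrable_trunc _).abs (hIck k)
            (fun x => abs_trunc_le_rpow hr0 h1 _ _)
        _ = c k ^ r * A := hintck k
    · have hid : Integrable (fun x : ℝ => x) ν := integrable_id' h1 hmomI
      have hz : ∫ x, c k * x ∂ν = 0 := by rw [integral_const_mul, hcent h1, mul_zero]
      have hsplit : ∫ x, trunc (c k) x ∂ν = - ∫ x, (c k * x - trunc (c k) x) ∂ν := by
        rw [integral_sub (hid.const_mul (c k)) (integrable_trunc _), hz]; ring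
      rw [hsplit, abs_neg]
      calc |∫ x, (c k * x - trunc (c k) x) ∂ν|
          ≤ ∫ x, |c k * x - trunc (c k) x| ∂ν := by
            simpa [Real.norm_eq_abs] using
              norm_integral_le_integral_norm (μ := ν) (fun x => c k * x - trunc (c k) x)
        _ ≤ ∫ x, |c k * x| ^ r ∂ν := integral_mono
            ((hid.const_mul (c k)).sub (integrable_trunc _)).abs (hIck k)
            (fun x => abs_sub_trunc_le h1.le _ _)
        _ = c k ^ r * A := hintck k
  -- the truncated sum
  set Z : Ω → ℝ := ∑ k ∈ s, G k with hZdef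
  have hZapp : ∀ ω, Z ω = ∑ k ∈ s, G k ω := fun ω => by rw [hZdef]; simp
  have hZ2 : MemLp Z 2 μ := memLp_finset_sum' s (fun k _ => hG2 k)
  have hpair : (↑s : Set ℕ).Pairwise fun i j => IndepFun (G i) (G j) μ :=
    fun i _ j _ hij => (hiid.comp _ (fun k => trunc_meas (c k))).indepFun hij
  have hvarZ : variance Z μ ≤ T := by
    rw [hZdef, IndepFun.variance_sum (fun k _ => hG2 k) hpair]
    calc ∑ k ∈ s, variance (G k) μ ≤ ∑ k ∈ s, c k ^ r * A :=
          Finset.sum_le_sum (fun k _ => hvar k)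
      _ = T := by rw [← Finset.sum_mul, mul_comm]
  have hEZ : |μ[Z]| ≤ T := by
    have hint : μ[Z] = ∑ k ∈ s, ∫ ω, G k ω ∂μ := by
      rw [show μ[Z] = ∫ ω, ∑ k ∈ s, G k ω ∂μ from integral_congr_ae (ae_of_all _ hZapp)]
      exact integral_finset_sum s (fun k _ => (hG2 k).integrable one_le_two)
    calc |μ[Z]| = |∑ k ∈ s, ∫ ω, G k ω ∂μ| := by rw [hint]
      _ ≤ ∑ k ∈ s, |∫ ω, G k ω ∂μ| := Finset.abs_sum_le_sum_abs _ _
      _ ≤ ∑ k ∈ s, c k ^ r * A := Finset.sum_le_sum fun k _ => hmean k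
      _ = T := by rw [← Finset.sum_mul, mul_comm]
  have cheb : μ {ω | ε/2 ≤ |Z ω - μ[Z]|} ≤ ENNReal.ofReal (T / (ε/2)^2) := by
    refine le_trans (meas_ge_le_variance_div_sq hZ2 (half_pos hε)) ?_
    apply ENNReal.ofReal_le_ofReal
    gcongr
  by_cases hTe : T ≤ ε / 2
  · have hsub : {ω | ε ≤ |∑ k ∈ s, c k * Y k ω|} ⊆
        (⋃ k ∈ s, {ω | 1 < |c k * Y k ω|}) ∪ {ω | ε/2 ≤ |Z ω - μ[Z]|} := by
      intro ω hω
      by_cases hU : ∃ k ∈ s, 1 < |c k * Y k ω|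
      · obtain ⟨k, hk, h⟩ := hU
        exact Or.inl (Set.mem_biUnion hk h)
      · right
        push_neg at hU
        have hGeq : ∀ k ∈ s, G k ω = c k * Y k ω := by
          intro k hk
          simp only [hGdef, Function.comp_apply, trunc, if_pos (hU k hk)]
        have hZω : Z ω = ∑ k ∈ s, c k * Y k ω := by
          rw [hZapp ω]; exact Finset.sum_congr rfl hGeq
        simp only [Set.mem_setOf_eq] at hω ⊢
        have h1 : ε ≤ |Z ω| := by rw [hZω]; exact hω
        have h2 : |Z ω| - |μ[Z]| ≤ |Z ω - μ[Z]| := abs_sub_abs_le_abs_sub _ _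
        have h3 : |μ[Z]| ≤ ε/2 := le_trans hEZ hTe
        linarith
    have harith : T + T/(ε/2)^2 ≤ (1 + 4/ε^2 + 2/ε) * T := by
      have h4 : T/(ε/2)^2 = 4/ε^2 * T := by field_simp; ring
      have h5 : 0 ≤ 2/ε * T := mul_nonneg (by positivity) hT0
      have h6 : (1 + 4/ε^2 + 2/ε) * T = T + 4/ε^2 * T + 2/ε * T := by ring
      rw [h4, h6]; linarith
    calc μ {ω | ε ≤ |∑ k ∈ s, c k * Y k ω|}
        ≤ μ ((⋃ k ∈ s, {ω | 1 < |c k * Y k ω|}) ∪ {ω | ε/2 ≤ |Z ω - μ[Z]|}) :=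
          measure_mono hsub
      _ ≤ μ (⋃ k ∈ s, {ω | 1 < |c k * Y k ω|}) + μ {ω | ε/2 ≤ |Z ω - μ[Z]|} :=
          measure_union_le _ _
      _ ≤ (∑ k ∈ s, ENNReal.ofReal (c k ^ r * A)) + ENNReal.ofReal (T/(ε/2)^2) :=
          add_le_add (le_trans (measure_biUnion_finset_le s _)
            (Finset.sum_le_sum fun k _ => key1 k)) cheb
      _ = ENNReal.ofReal T + ENNReal.ofReal (T/(ε/2)^2) := by
          congr 1
          rw [← ENNReal.ofReal_sum_of_nonneg
            (fun k _ => mul_nonneg (Real.rpow_nonneg (hc k) r) hA0)]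
          congr 1
          rw [← Finset.sum_mul, mul_comm]
      _ = ENNReal.ofReal (T + T/(ε/2)^2) := (ENNReal.ofReal_add hT0 (by positivity)).symm
      _ ≤ ENNReal.ofReal ((1 + 4/ε^2 + 2/ε) * (A * ∑ k ∈ s, c k ^ r)) :=
          ENNReal.ofReal_le_ofReal (by rw [← hT]; exact harith)
  · push_neg at hTe
    calc μ {ω | ε ≤ |∑ k ∈ s, c k * Y k ω|} ≤ 1 := prob_le_one
      _ ≤ ENNReal.ofReal ((1 + 4/ε^2 + 2/ε) * (A * ∑ k ∈ s, c k ^ r)) := by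
          rw [show (1:ℝ≥0∞) = ENNReal.ofReal 1 by simp]
          apply ENNReal.ofReal_le_ofReal
          rw [← hT]
          have h4 : (2/ε) * (ε/2) = 1 := by field_simp
          have h5 : (2/ε) * (ε/2) < (2/ε) * T := mul_lt_mul_of_pos_left hTe (by positivity)
          have h6 : 0 ≤ (1 + 4/ε^2) * T := by positivity
          nlinarith


end AuxPf


open AuxPf in
/-- Let `0 < ϑ < r ≤ 2`.  Let `(P_k)` be a nondecreasing sequence of real random
variables with `∑_k e^{−β P_k} < ∞` a.s. for every `β > 1`, and let `(X_k)` be i.i.d. real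
random variables with common law `ν ∈ M¹_r(ℝ)`, independent of `(P_k)`.  Then the partial sums
`Z_n* = ∑_{k<n} e^{−P_k/ϑ} X_k` converge in probability to some random variable `Z`. -/
theorem partial_sums_tendstoInMeasure {Ω : Type*} [MeasurableSpace Ω] (P : Measure Ω)
    [IsProbabilityMeasure P] (ϑ r : ℝ) (h0 : 0 < ϑ) (hϑr : ϑ < r) (hr : r ≤ 2)
    (Pk : ℕ → Ω → ℝ) (X : ℕ → Ω → ℝ) (ν : Measure ℝ)
    (hPk_meas : ∀ k, Measurable (Pk k)) (hX_meas : ∀ k, Measurable (X k))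
    (hmono : ∀ ω, Monotone fun k => Pk k ω)
    (hfin : ∀ β : ℝ, 1 < β → ∀ᵐ ω ∂P, Summable fun k => Real.exp (-β * Pk k ω))
    (hiid : iIndepFun X P)
    (hlaw : ∀ k, P.map (X k) = ν)
    (hν : IsProbabilityMeasure ν)
    (hmom : (∫⁻ x, ENNReal.ofReal (|x| ^ r) ∂ν) < ⊤)
    (hcent : 1 < r → ∫ x, x ∂ν = 0)
    (hindep : IndepFun (fun ω (k : ℕ) => Pk k ω) (fun ω (k : ℕ) => X k ω) P) :
    ∃ Z : Ω → ℝ,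
      TendstoInMeasure P
        (fun n ω => ∑ k ∈ Finset.range n, Real.exp (-(Pk k ω) / ϑ) * X k ω) atTop Z := by
  classical
  have hr0 : 0 < r := h0.trans hϑr
  set S : ℕ → Ω → ℝ := fun n ω => ∑ k ∈ Finset.range n, Real.exp (-(Pk k ω) / ϑ) * X k ω
    with hS
  have hSmeas : ∀ n, Measurable (S n) := fun n => Finset.measurable_sum _
    (fun k _ => (((hPk_meas k).neg.div_const ϑ).exp.mul (hX_meas k)))
  set W : Ω → ℕ → ℝ := fun ω k => Pk k ω with hW
  set V : Ω → ℕ → ℝ := fun ω k => X k ω with hV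
  have hWmeas : Measurable W := measurable_pi_iff.mpr (fun k => hPk_meas k)
  have hVmeas : Measurable V := measurable_pi_iff.mpr (fun k => hX_meas k)
  set μW : Measure (ℕ → ℝ) := P.map W with hμW
  set μV : Measure (ℕ → ℝ) := P.map V with hμV
  have hprobW : IsProbabilityMeasure μW := Measure.isProbabilityMeasure_map hWmeas.aemeasurable
  have hprobV : IsProbabilityMeasure μV := Measure.isProbabilityMeasure_map hVmeas.aemeasurable
  -- the coordinates under μV are iid with law ν
  have hiidV : iIndepFun
      (fun k (v : ℕ → ℝ) => v k) μV := by
    rw [iIndepFun_iff_measure_inter_preimage_eq_mul]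
    intro s sets hsets
    have hP := (iIndepFun_iff_measure_inter_preimage_eq_mul.mp hiid) s hsets
    have hmeasInter : MeasurableSet (⋂ i ∈ s, (fun v : ℕ → ℝ => v i) ⁻¹' sets i) :=
      Finset.measurableSet_biInter s (fun i hi => measurable_pi_apply i (hsets i hi))
    have h1 : μV (⋂ i ∈ s, (fun v : ℕ → ℝ => v i) ⁻¹' sets i)
        = P (⋂ i ∈ s, X i ⁻¹' sets i) := by
      rw [hμV, Measure.map_apply hVmeas hmeasInter]
      congr 1
      ext ω
      simp [hV]
    have h2 : ∀ i ∈ s, μV ((fun v : ℕ → ℝ => v i) ⁻¹' sets i) = P (X i ⁻¹' sets i) := by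
      intro i hi
      rw [hμV, Measure.map_apply hVmeas (measurable_pi_apply i (hsets i hi))]
      rfl
    rw [h1, hP]
    exact Finset.prod_congr rfl (fun i hi => (h2 i hi).symm)
  have hlawV : ∀ k : ℕ, μV.map (fun v : ℕ → ℝ => v k) = ν := by
    intro k
    rw [hμV, Measure.map_map (measurable_pi_apply k) hVmeas]
    exact hlaw k
  -- moment integrability
  have hmeas_rpow : Measurable fun x : ℝ => |x| ^ r :=
    (Real.continuous_rpow_const hr0.le).measurable.comp measurable_abs
  have hmomI : Integrable (fun x => |x| ^ r) ν := by
    refine ⟨hmeas_rpow.aestronglyMeasurable, ?_⟩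
    rw [hasFiniteIntegral_iff_ofReal (ae_of_all _ fun x => Real.rpow_nonneg (abs_nonneg x) r)]
    exact hmom
  set Cν : ℝ := ∫ x, |x| ^ r ∂ν with hCν
  set q : ℝ := r / ϑ with hq
  have hq1 : 1 < q := (one_lt_div h0).mpr hϑr
  set e : (ℕ → ℝ) → ℕ → ℝ≥0∞ := fun w k => ENNReal.ofReal (Real.exp (-q * w k)) with he
  have hemeas : ∀ k, Measurable fun w : ℕ → ℝ => e w k :=
    fun k => ((Measurable.const_mul (f := fun w : ℕ → ℝ => w k) (measurable_pi_apply k) (-q)).exp).ennreal_ofReal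
  set B : ℝ → ℕ → ℝ≥0∞ := fun ε m => ∫⁻ w,
    min 1 (ENNReal.ofReal ((1 + 4/ε^2 + 2/ε) * Cν) * ∑' k, e w (m + k)) ∂μW with hB
  -- main estimate
  have hCν0 : 0 ≤ Cν := integral_nonneg fun x => Real.rpow_nonneg (abs_nonneg x) r
  have hmain : ∀ ε : ℝ, 0 < ε → ∀ m n : ℕ, m ≤ n →
      P {ω | ε ≤ |S n ω - S m ω|} ≤ B ε m := by
    intro ε hε m n hmn
    have hC0 : (0:ℝ) ≤ 1 + 4/ε^2 + 2/ε := by positivity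
    set F : (ℕ → ℝ) × (ℕ → ℝ) → ℝ :=
      fun p => ∑ k ∈ Finset.Ico m n, Real.exp (-(p.1 k)/ϑ) * p.2 k with hF
    have hFmeas : Measurable F := Finset.measurable_sum _ (fun k _ =>
      (((((measurable_pi_apply k).comp measurable_fst :
          Measurable fun p : (ℕ → ℝ) × (ℕ → ℝ) => p.1 k)).neg.div_const ϑ).exp.mul
        ((measurable_pi_apply k).comp measurable_snd)))
    have hsetF : MeasurableSet {p : (ℕ → ℝ) × (ℕ → ℝ) | ε ≤ |F p|} :=
      measurableSet_le measurable_const hFmeas.abs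
    have hev : {ω | ε ≤ |S n ω - S m ω|} = (fun ω => (W ω, V ω)) ⁻¹' {p | ε ≤ |F p|} := by
      ext ω
      simp only [Set.mem_setOf_eq, Set.mem_preimage, hS]
      rw [← Finset.sum_Ico_eq_sub (fun k => Real.exp (-(Pk k ω)/ϑ) * X k ω) hmn]
    have hprod : P.map (fun ω => (W ω, V ω)) = μW.prod μV :=
      (indepFun_iff_map_prod_eq_prod_map_map hWmeas.aemeasurable hVmeas.aemeasurable).mp hindep
    rw [hev, ← Measure.map_apply (hWmeas.prodMk hVmeas) hsetF, hprod,
      Measure.prod_apply hsetF, hB]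
    refine lintegral_mono fun w => ?_
    refine le_min prob_le_one ?_
    have hinner := core_estimate μV hr0 hr (fun k (v : ℕ → ℝ) => v k)
      (fun k => measurable_pi_apply k) ν hiidV hlawV hmomI hcent
      (fun k => Real.exp (-(w k)/ϑ)) (fun k => (Real.exp_pos _).le) (Finset.Ico m n) ε hε
    have hpre : (Prod.mk w ⁻¹' {p : (ℕ → ℝ) × (ℕ → ℝ) | ε ≤ |F p|}) =
        {v : ℕ → ℝ | ε ≤ |∑ k ∈ Finset.Ico m n, Real.exp (-(w k)/ϑ) * v k|} := rfl
    rw [hpre]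
    refine le_trans hinner ?_
    have hexp : ∀ k : ℕ, (Real.exp (-(w k)/ϑ)) ^ r = Real.exp (-q * w k) := by
      intro k
      rw [← Real.exp_mul]
      congr 1
      rw [hq]
      ring
    calc ENNReal.ofReal ((1+4/ε^2+2/ε) * (Cν * ∑ k ∈ Finset.Ico m n, Real.exp (-(w k)/ϑ) ^ r))
        = ENNReal.ofReal ((1+4/ε^2+2/ε) * Cν) *
            ENNReal.ofReal (∑ k ∈ Finset.Ico m n, Real.exp (-q * w k)) := by
          simp_rw [hexp]
          rw [← mul_assoc, ENNReal.ofReal_mul (mul_nonneg hC0 hCν0)]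
      _ = ENNReal.ofReal ((1+4/ε^2+2/ε) * Cν) * ∑ k ∈ Finset.Ico m n, e w k := by
          rw [ENNReal.ofReal_sum_of_nonneg (fun k _ => (Real.exp_pos _).le)]
      _ ≤ ENNReal.ofReal ((1+4/ε^2+2/ε) * Cν) * ∑' k, e w (m + k) := by
          refine mul_le_mul_right ?_ _
          rw [Finset.sum_Ico_eq_sum_range]
          exact ENNReal.sum_le_tsum _
  -- a.e. finiteness of the exponential series under μW
  have haeP : ∀ᵐ ω ∂P, (∑' k, e (W ω) k) ≠ ∞ := by
    filter_upwards [hfin q hq1] with ω hsum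
    have hsum' : Summable fun k => Real.exp (-q * W ω k) := hsum
    have : (∑' k, e (W ω) k) = ENNReal.ofReal (∑' k, Real.exp (-q * W ω k)) :=
      (ENNReal.ofReal_tsum_of_nonneg (fun k => (Real.exp_pos _).le) hsum').symm
    rw [this]
    exact ENNReal.ofReal_ne_top
  have htsum_meas : Measurable fun w : ℕ → ℝ => ∑' k, e w k := Measurable.ennreal_tsum hemeas
  have hmeasset : MeasurableSet {w : ℕ → ℝ | (∑' k, e w k) ≠ ∞} := by
    rw [show {w : ℕ → ℝ | (∑' k, e w k) ≠ ∞} = ((fun w => ∑' k, e w k) ⁻¹' {∞})ᶜ from rfl]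
    exact (htsum_meas (measurableSet_singleton _)).compl
  have haeW : ∀ᵐ w ∂μW, (∑' k, e w k) ≠ ∞ := by
    rw [hμW]
    exact (ae_map_iff (p := fun w => (∑' k, e w k) ≠ ∞) hWmeas.aemeasurable hmeasset).mpr haeP
  -- the bound tends to zero
  have hBtend : ∀ ε : ℝ, 0 < ε → Tendsto (fun m => B ε m) atTop (𝓝 0) := by
    intro ε hε
    set K := ENNReal.ofReal ((1 + 4/ε^2 + 2/ε) * Cν) with hK
    have hKne : K ≠ ∞ := ENNReal.ofReal_ne_top
    have h := tendsto_lintegral_of_dominated_convergence (μ := μW)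
      (F := fun m w => min 1 (K * ∑' k, e w (m + k))) (f := fun _ => 0) (bound := fun _ => 1)
      (fun m => measurable_const.min
        ((Measurable.ennreal_tsum (fun k => hemeas (m + k))).const_mul K))
      (fun m => ae_of_all _ fun w => min_le_left _ _)
      (by simp)
      (by
        filter_upwards [haeW] with w hw
        have h1 : Tendsto (fun m => ∑' k, e w (m + k)) atTop (𝓝 0) := by
          have := ENNReal.tendsto_sum_nat_add (fun k => e w k) hw
          simpa [add_comm] using this
        have h2 : Tendsto (fun m => K * ∑' k, e w (m + k)) atTop (𝓝 0) := by
          have := ENNReal.Tendsto.const_mul (a := K) h1 (Or.inr hKne)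
          simpa using this
        exact tendsto_of_tendsto_of_tendsto_of_le_of_le tendsto_const_nhds h2
          (fun m => zero_le) (fun m => min_le_right _ _))
    simpa [hB] using h
  -- choose a rapidly convergent subsequence
  have hBtend' : ∀ (εr : ℝ), 0 < εr → ∀ δ : ℝ≥0∞, 0 < δ → ∃ Nn : ℕ, ∀ m, Nn ≤ m → B εr m ≤ δ :=
    fun εr hεr δ hδ => (ENNReal.tendsto_atTop_zero.mp (hBtend εr hεr)) δ hδ
  choose N hN using fun j : ℕ => hBtend' ((1/2)^j) (by positivity)
    (ENNReal.ofReal ((1/2)^j)) (ENNReal.ofReal_pos.mpr (by positivity))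
  set φ : ℕ → ℕ := fun j => Nat.rec (motive := fun _ => ℕ) (N 0)
    (fun i ih => max (ih + 1) (N (i + 1))) j with hφ
  have hφsucc : ∀ j, φ (j + 1) = max (φ j + 1) (N (j + 1)) := fun j => rfl
  have hφmono : StrictMono φ := strictMono_nat_of_lt_succ (fun j => by
    rw [hφsucc]
    exact lt_of_lt_of_le (Nat.lt_succ_self _) (le_max_left _ _))
  have hφN : ∀ j, N j ≤ φ j := by
    intro j
    cases j with
    | zero => exact le_refl _
    | succ i => rw [hφsucc]; exact le_max_right _ _
  set E : ℕ → Set Ω := fun j => {ω | (1/2:ℝ)^j ≤ |S (φ (j+1)) ω - S (φ j) ω|} with hE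
  have hstep : ∀ j, P (E j) ≤ ENNReal.ofReal ((1/2)^j) := fun j =>
    le_trans (hmain _ (by positivity) (φ j) (φ (j+1)) (hφmono (Nat.lt_succ_self j)).le)
      (hN j (φ j) (hφN j))
  have hEsum : (∑' j, P (E j)) ≠ ∞ := by
    refine ne_top_of_le_ne_top ?_ (ENNReal.tsum_le_tsum hstep)
    rw [← ENNReal.ofReal_tsum_of_nonneg (fun j => by positivity) summable_geometric_two]
    exact ENNReal.ofReal_ne_top
  have hBC : ∀ᵐ ω ∂P, ∀ᶠ j in atTop, ω ∉ E j := ae_eventually_notMem hEsum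
  -- almost sure convergence along the subsequence
  have hexists : ∀ᵐ ω ∂P, ∃ L : ℝ, Tendsto (fun j => S (φ j) ω) atTop (𝓝 L) := by
    filter_upwards [hBC] with ω hω
    obtain ⟨J, hJ⟩ := eventually_atTop.mp hω
    set d : ℕ → ℝ := fun j => if J ≤ j then (1/2)^j else dist (S (φ j) ω) (S (φ (j+1)) ω)
      with hd
    have hdist : ∀ j, dist (S (φ j) ω) (S (φ (j+1)) ω) ≤ d j := by
      intro j
      simp only [hd]
      split
      · rename_i hJj
        have hnot := hJ j hJj
        simp only [hE, Set.mem_setOf_eq, not_le] at hnot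
        rw [Real.dist_eq, abs_sub_comm]
        exact hnot.le
      · exact le_refl _
    have hdsum : Summable d := by
      refine (summable_nat_add_iff J).mp ?_
      refine Summable.congr ((summable_nat_add_iff J).mpr summable_geometric_two) ?_
      intro n
      simp only [hd]
      rw [if_pos (Nat.le_add_left J n)]
    exact cauchySeq_tendsto_of_complete (cauchySeq_of_dist_le_of_summable d hdist hdsum)
  set Z : Ω → ℝ := fun ω => if h : ∃ L : ℝ, Tendsto (fun j => S (φ j) ω) atTop (𝓝 L)
    then h.choose else 0 with hZ
  have hZtend : ∀ᵐ ω ∂P, Tendsto (fun j => S (φ j) ω) atTop (𝓝 (Z ω)) := by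
    filter_upwards [hexists] with ω hω
    rw [hZ]
    simp only [dif_pos hω]
    exact hω.choose_spec
  have hsubTIM : TendstoInMeasure P (fun j => S (φ j)) atTop Z :=
    tendstoInMeasure_of_tendsto_ae (fun j => (hSmeas (φ j)).aestronglyMeasurable) hZtend
  refine ⟨Z, ?_⟩
  rw [tendstoInMeasure_iff_dist]
  intro ε hε
  rw [ENNReal.tendsto_atTop_zero]
  intro δ hδ
  set δ' : ℝ≥0∞ := min δ 1 with hδ'
  have hδ'0 : δ' ≠ 0 := ne_of_gt (lt_min hδ one_pos)
  have hhalfpos : 0 < δ' / 2 := ENNReal.div_pos hδ'0 ENNReal.ofNat_ne_top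
  obtain ⟨N1, hN1⟩ := (ENNReal.tendsto_atTop_zero.mp (hBtend (ε/2) (half_pos hε))) (δ'/2) hhalfpos
  obtain ⟨N2, hN2⟩ := (ENNReal.tendsto_atTop_zero.mp (tendstoInMeasure_iff_dist.mp hsubTIM (ε/2) (half_pos hε))) (δ'/2) hhalfpos
  set j := max N1 N2 with hj
  refine ⟨φ j, fun n hn => ?_⟩
  have hj1 : N1 ≤ φ j := le_trans (le_max_left _ _) hφmono.le_apply
  have hincl : {x | ε ≤ dist (S n x) (Z x)} ⊆
      {x | ε/2 ≤ |S n x - S (φ j) x|} ∪ {x | ε/2 ≤ dist (S (φ j) x) (Z x)} := by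
    intro x hx
    simp only [Set.mem_setOf_eq, Set.mem_union] at hx ⊢
    by_contra hcon
    push_neg at hcon
    obtain ⟨h1, h2⟩ := hcon
    have ht := dist_triangle (S n x) (S (φ j) x) (Z x)
    have h1' : dist (S n x) (S (φ j) x) < ε/2 := by rw [Real.dist_eq]; exact h1
    linarith
  calc P {x | ε ≤ dist (S n x) (Z x)}
      ≤ P {x | ε/2 ≤ |S n x - S (φ j) x|} + P {x | ε/2 ≤ dist (S (φ j) x) (Z x)} :=
        le_trans (measure_mono hincl) (measure_union_le _ _)
    _ ≤ B (ε/2) (φ j) + δ'/2 :=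
        add_le_add (hmain (ε/2) (half_pos hε) (φ j) n hn) (hN2 j (le_max_right _ _))
    _ ≤ δ'/2 + δ'/2 := add_le_add_left (hN1 (φ j) hj1) _
    _ = δ' := ENNReal.add_halves _
    _ ≤ δ := min_le_left _ _
end
end

section
/- For every ϑ ∈ (1,2): the function g_ϑ is convex on [0,∞) with concave derivative, g_ϑ(x) ~ x^ϑ log x / (ϑ(ϑ−1)) as x → ∞, and there exists a constant C_ϑ > 0 such that g_ϑ(x) ≤ C_ϑ f_1(x^ϑ) for all x ≥ 0. -/
open Filter
open scoped Topology

noncomputable section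

/-- `g_ϑ''(u) = 1/(e(2−ϑ))` for `u ≤ e^{1/(2−ϑ)}` and `u^{ϑ−2} log u` beyond, for `ϑ ∈ (1,2)`. -/
def gSecond (ϑ u : ℝ) : ℝ :=
  if u ≤ Real.exp (1 / (2 - ϑ)) then 1 / (Real.exp 1 * (2 - ϑ)) else u ^ (ϑ - 2) * Real.log u

/-- `g_ϑ'(t) = ∫_0^t g_ϑ''(u) du`. -/
def gFirst (ϑ t : ℝ) : ℝ := ∫ u in (0:ℝ)..t, gSecond ϑ u

/-- `g_ϑ(x) = ∫_0^x ∫_0^t g_ϑ''(u) du dt`. -/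
def gFun (ϑ x : ℝ) : ℝ := ∫ t in (0:ℝ)..x, gFirst ϑ t

/-! The function `u ↦ u ^ (ϑ - 2) * log u` increases up to `e^{1/(2-ϑ)}`, where it attains its
maximum `1/(e(2-ϑ))`, and decreases beyond it; `g_ϑ''` replaces its increasing part by that
maximum, so it is continuous, nonnegative and nonincreasing. This gives the convexity of `g_ϑ`
and the concavity of `g_ϑ'`. Beyond the breakpoint `g_ϑ` differs by an affine function from the
explicit primitive `x ^ ϑ * (log x - 1/ϑ - 1/(ϑ-1)) / (ϑ(ϑ-1))`, which yields the asymptotics.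
The bound by `f_1(x ^ ϑ)` follows from the asymptotics for large `x` and from
`g_ϑ(x) ≤ x² / (2e(2-ϑ))` for small `x`. -/

open Real Set

lemma hasDerivAt_rpow_mul_log_sub (p k : ℝ) {t : ℝ} (ht : 0 < t) :
    HasDerivAt (fun t => t ^ p * (log t - k)) (t ^ (p - 1) * (p * (log t - k) + 1)) t := by
  refine ((hasDerivAt_rpow_const (p := p) (Or.inl ht.ne')).mul
    ((hasDerivAt_log ht.ne').sub_const k)).congr_deriv ?_
  rw [rpow_sub_one ht.ne']
  field_simp

lemma exists_eq_add_of_hasDerivAt_Ioi {f g f' : ℝ → ℝ} {a : ℝ}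
    (hf : ∀ x > a, HasDerivAt f (f' x) x) (hg : ∀ x > a, HasDerivAt g (f' x) x) :
    ∃ c, ∀ x > a, f x = g x + c := by
  obtain ⟨c, hc⟩ := isOpen_Ioi.exists_eq_add_of_deriv_eq isPreconnected_Ioi
    (fun x hx => (hf x hx).differentiableAt.differentiableWithinAt)
    (fun x hx => (hg x hx).differentiableAt.differentiableWithinAt)
    (fun x hx => by simp only [(hf x hx).deriv, (hg x hx).deriv])
  exact ⟨c, fun x hx => hc hx⟩

lemma tendsto_rpow_mul_log_sub_add_div {p : ℝ} (hp : 1 < p) {d : ℝ} (hd : d ≠ 0) (k B C : ℝ) :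
    Tendsto (fun x => (x ^ p * (log x - k) / d + B * x + C) / (x ^ p * log x / d))
      atTop (𝓝 1) := by
  have hlog := tendsto_log_atTop
  have hx1 : Tendsto (fun x : ℝ => x ^ (p - 1) * log x) atTop atTop :=
    (tendsto_rpow_atTop (by linarith)).atTop_mul_atTop₀ hlog
  have hx : Tendsto (fun x : ℝ => x ^ p * log x) atTop atTop :=
    (tendsto_rpow_atTop (by linarith)).atTop_mul_atTop₀ hlog
  -- for `x > 1` the ratio is `1 - k / log x + d B / (x ^ (p - 1) log x) + d C / (x ^ p log x)`
  have hlim := ((tendsto_const_nhds (x := (1 : ℝ))).sub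
    ((tendsto_const_nhds (x := k)).div_atTop hlog)).add
    ((tendsto_const_nhds (x := d * B)).div_atTop hx1 |>.add
      ((tendsto_const_nhds (x := d * C)).div_atTop hx))
  rw [show (1 : ℝ) - 0 + (0 + 0) = 1 by norm_num] at hlim
  refine hlim.congr' ?_
  filter_upwards [eventually_gt_atTop 1] with x hx
  have hx0 : 0 < x := one_pos.trans hx
  have hL : 0 < log x := log_pos hx
  have hpow : x ^ p = x ^ (p - 1) * x := by
    rw [rpow_sub_one hx0.ne', div_mul_cancel₀ _ hx0.ne']
  rw [hpow]
  field_simp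
  ring

def gSecondBreak (ϑ : ℝ) : ℝ := exp (1 / (2 - ϑ))

def gSecondMax (ϑ : ℝ) : ℝ := 1 / (exp 1 * (2 - ϑ))

section gSecond

variable {ϑ : ℝ}

lemma gSecond_def (ϑ u : ℝ) :
    gSecond ϑ u = if u ≤ gSecondBreak ϑ then gSecondMax ϑ else u ^ (ϑ - 2) * log u := rfl

lemma one_lt_gSecondBreak (h2 : ϑ < 2) : 1 < gSecondBreak ϑ := by
  have : 0 < 2 - ϑ := by linarith
  exact one_lt_exp_iff.2 (by positivity)

lemma gSecondMax_pos (h2 : ϑ < 2) : 0 < gSecondMax ϑ := by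
  have : 0 < 2 - ϑ := by linarith
  unfold gSecondMax
  positivity

lemma rpow_mul_log_gSecondBreak (h2 : ϑ < 2) :
    gSecondBreak ϑ ^ (ϑ - 2) * log (gSecondBreak ϑ) = gSecondMax ϑ := by
  have : 2 - ϑ ≠ 0 := by linarith
  rw [gSecondBreak, rpow_def_of_pos (exp_pos _), log_exp,
    show 1 / (2 - ϑ) * (ϑ - 2) = -1 by field_simp; ring, exp_neg, gSecondMax]
  field_simp

lemma antitoneOn_rpow_mul_log (h2 : ϑ < 2) :
    AntitoneOn (fun u => u ^ (ϑ - 2) * log u) (Ici (gSecondBreak ϑ)) := by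
  have hb := one_lt_gSecondBreak h2
  have hderiv (u) (hu : gSecondBreak ϑ ≤ u) := by
    simpa only [sub_zero] using hasDerivAt_rpow_mul_log_sub (ϑ - 2) 0 (by linarith : 0 < u)
  refine antitoneOn_of_hasDerivWithinAt_nonpos (convex_Ici _)
    (fun u hu => (hderiv u hu).continuousAt.continuousWithinAt)
    (fun u hu => (hderiv u (interior_subset hu)).hasDerivWithinAt) fun u hu => ?_
  rw [interior_Ici, mem_Ioi] at hu
  have hlog : 1 / (2 - ϑ) ≤ log u := by
    rw [← log_exp (1 / (2 - ϑ))]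
    exact log_le_log (exp_pos _) (le_of_lt hu)
  have : (ϑ - 2) * log u + 1 ≤ 0 := by
    have h : 0 < 2 - ϑ := by linarith
    rw [div_le_iff₀' h] at hlog
    linarith
  exact mul_nonpos_of_nonneg_of_nonpos (rpow_nonneg (by linarith) _) this

lemma gSecond_le_gSecondMax (h2 : ϑ < 2) (u : ℝ) : gSecond ϑ u ≤ gSecondMax ϑ := by
  rw [gSecond_def]
  split_ifs with hu
  · exact le_rfl
  · rw [← rpow_mul_log_gSecondBreak h2]
    exact antitoneOn_rpow_mul_log h2 self_mem_Ici (le_of_not_ge hu) (le_of_not_ge hu)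

lemma gSecond_antitone (h2 : ϑ < 2) : Antitone (gSecond ϑ) := by
  intro u v huv
  by_cases hv : v ≤ gSecondBreak ϑ
  · rw [gSecond_def, if_pos hv, gSecond_def, if_pos (huv.trans hv)]
  by_cases hu : u ≤ gSecondBreak ϑ
  · rw [gSecond_def ϑ u, if_pos hu]
    exact gSecond_le_gSecondMax h2 v
  rw [gSecond_def, if_neg hv, gSecond_def, if_neg hu]
  exact antitoneOn_rpow_mul_log h2 (le_of_not_ge hu) (le_of_not_ge hv) huv

lemma gSecond_nonneg (h2 : ϑ < 2) (u : ℝ) : 0 ≤ gSecond ϑ u := by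
  rw [gSecond_def]
  split_ifs with hu
  · exact (gSecondMax_pos h2).le
  · have hu1 : 1 ≤ u := (one_lt_gSecondBreak h2).le.trans (le_of_not_ge hu)
    exact mul_nonneg (rpow_nonneg (by linarith) _) (log_nonneg hu1)

lemma gSecond_continuous (h2 : ϑ < 2) : Continuous (gSecond ϑ) := by
  have hb := one_lt_gSecondBreak h2
  refine continuous_if_le continuous_id continuous_const continuousOn_const ?_ ?_
  · intro u (hu : gSecondBreak ϑ ≤ u)
    have hu0 : u ≠ 0 := by linarith
    exact ((continuousAt_id.rpow_const (Or.inl hu0)).mul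
      (continuousAt_log hu0)).continuousWithinAt
  · intro u (hu : u = gSecondBreak ϑ)
    subst hu
    exact (rpow_mul_log_gSecondBreak h2).symm

end gSecond

section gFun

variable {ϑ : ℝ}

lemma hasDerivAt_gFirst (h2 : ϑ < 2) (t : ℝ) : HasDerivAt (gFirst ϑ) (gSecond ϑ t) t :=
  ((gSecond_continuous h2).integral_hasStrictDerivAt 0 t).hasDerivAt

lemma deriv_gFirst (h2 : ϑ < 2) : deriv (gFirst ϑ) = gSecond ϑ :=
  funext fun t => (hasDerivAt_gFirst h2 t).deriv

lemma gFirst_continuous (h2 : ϑ < 2) : Continuous (gFirst ϑ) :=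
  continuous_iff_continuousAt.2 fun t => (hasDerivAt_gFirst h2 t).continuousAt

lemma hasDerivAt_gFun (h2 : ϑ < 2) (x : ℝ) : HasDerivAt (gFun ϑ) (gFirst ϑ x) x :=
  ((gFirst_continuous h2).integral_hasStrictDerivAt 0 x).hasDerivAt

lemma gFirst_monotone (h2 : ϑ < 2) : Monotone (gFirst ϑ) :=
  monotone_of_hasDerivAt_nonneg (hasDerivAt_gFirst h2) (gSecond_nonneg h2)

lemma gFun_convexOn (h2 : ϑ < 2) : ConvexOn ℝ univ (gFun ϑ) := by
  refine Monotone.convexOn_univ_of_deriv (fun x => (hasDerivAt_gFun h2 x).differentiableAt) ?_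
  rw [funext fun x => (hasDerivAt_gFun h2 x).deriv]
  exact gFirst_monotone h2

lemma gFirst_concaveOn (h2 : ϑ < 2) : ConcaveOn ℝ univ (gFirst ϑ) := by
  refine Antitone.concaveOn_univ_of_deriv (fun t => (hasDerivAt_gFirst h2 t).differentiableAt) ?_
  rw [deriv_gFirst h2]
  exact gSecond_antitone h2

lemma gFirst_le (h2 : ϑ < 2) {t : ℝ} (ht : 0 ≤ t) : gFirst ϑ t ≤ gSecondMax ϑ * t := by
  calc gFirst ϑ t ≤ ∫ _ in (0 : ℝ)..t, gSecondMax ϑ :=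
        intervalIntegral.integral_mono_on ht ((gSecond_continuous h2).intervalIntegrable _ _)
          intervalIntegrable_const fun u _ => gSecond_le_gSecondMax h2 u
    _ = gSecondMax ϑ * t := by simp [mul_comm]

lemma gFun_le (h2 : ϑ < 2) {x : ℝ} (hx : 0 ≤ x) : gFun ϑ x ≤ gSecondMax ϑ * x ^ 2 / 2 := by
  calc gFun ϑ x ≤ ∫ t in (0 : ℝ)..x, gSecondMax ϑ * t :=
        intervalIntegral.integral_mono_on hx ((gFirst_continuous h2).intervalIntegrable _ _)
          ((continuous_const_mul _).intervalIntegrable _ _) fun t ht => gFirst_le h2 ht.1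
    _ = gSecondMax ϑ * x ^ 2 / 2 := by
      rw [intervalIntegral.integral_const_mul, integral_id]
      ring

lemma exists_gFirst_eq (h1 : 1 < ϑ) (h2 : ϑ < 2) : ∃ B, ∀ t > gSecondBreak ϑ,
    gFirst ϑ t = t ^ (ϑ - 1) * (log t - 1 / (ϑ - 1)) / (ϑ - 1) + B := by
  have hb := one_lt_gSecondBreak h2
  refine exists_eq_add_of_hasDerivAt_Ioi (fun t _ => hasDerivAt_gFirst h2 t) fun t ht => ?_
  rw [gSecond_def, if_neg (not_le.2 ht)]
  refine ((hasDerivAt_rpow_mul_log_sub (ϑ - 1) _ (by linarith)).div_const _).congr_deriv ?_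
  have : ϑ - 1 ≠ 0 := by linarith
  rw [show ϑ - 1 - 1 = ϑ - 2 by ring]
  field_simp
  ring

lemma exists_gFun_eq (h1 : 1 < ϑ) (h2 : ϑ < 2) : ∃ B C, ∀ x > gSecondBreak ϑ,
    gFun ϑ x = x ^ ϑ * (log x - (1 / ϑ + 1 / (ϑ - 1))) / (ϑ * (ϑ - 1)) + B * x + C := by
  have hb := one_lt_gSecondBreak h2
  obtain ⟨B, hB⟩ := exists_gFirst_eq h1 h2
  obtain ⟨C, hC⟩ := exists_eq_add_of_hasDerivAt_Ioi (fun x _ => hasDerivAt_gFun h2 x)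
    (g := fun x => x ^ ϑ * (log x - (1 / ϑ + 1 / (ϑ - 1))) / (ϑ * (ϑ - 1)) + B * x)
    fun x hx => by
      rw [hB x hx]
      refine (((hasDerivAt_rpow_mul_log_sub ϑ _ (by linarith)).div_const _).add
        ((hasDerivAt_id x).const_mul B)).congr_deriv ?_
      have : ϑ - 1 ≠ 0 := by linarith
      have : ϑ ≠ 0 := by linarith
      field_simp
      ring
  exact ⟨B, C, hC⟩

lemma tendsto_gFun_div (h1 : 1 < ϑ) (h2 : ϑ < 2) :
    Tendsto (fun x => gFun ϑ x / (x ^ ϑ * log x / (ϑ * (ϑ - 1)))) atTop (𝓝 1) := by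
  obtain ⟨B, C, hBC⟩ := exists_gFun_eq h1 h2
  refine (tendsto_rpow_mul_log_sub_add_div h1 (d := ϑ * (ϑ - 1)) (by nlinarith)
    (1 / ϑ + 1 / (ϑ - 1)) B C).congr' ?_
  filter_upwards [eventually_gt_atTop (gSecondBreak ϑ)] with x hx
  rw [hBC x hx]

end gFun

lemma le_fp_one {y : ℝ} (hy : 0 ≤ y) : y ≤ fp 1 y := by
  have : 0 ≤ plog y := le_max_right _ _
  rw [fp, rpow_one]
  nlinarith

lemma mul_log_le_fp_one {y : ℝ} (hy : 0 ≤ y) : y * log y ≤ fp 1 y := by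
  have : log y ≤ plog y := le_max_left _ _
  rw [fp, rpow_one]
  nlinarith

section bound

variable {ϑ : ℝ}

lemma gFun_le_mul_rpow (h2 : ϑ < 2) {x X : ℝ} (hx : 0 ≤ x) (hxX : x ≤ X) :
    gFun ϑ x ≤ gSecondMax ϑ * X ^ (2 - ϑ) / 2 * x ^ ϑ := by
  have hc := gSecondMax_pos h2
  have hsplit : x ^ 2 = x ^ (2 - ϑ) * x ^ ϑ := by
    rw [← rpow_add' hx (by norm_num), sub_add_cancel, rpow_two]
  calc gFun ϑ x ≤ gSecondMax ϑ * x ^ 2 / 2 := gFun_le h2 hx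
    _ = gSecondMax ϑ * x ^ (2 - ϑ) / 2 * x ^ ϑ := by rw [hsplit]; ring
    _ ≤ gSecondMax ϑ * X ^ (2 - ϑ) / 2 * x ^ ϑ := by gcongr

lemma exists_gFun_le_mul_fp (h1 : 1 < ϑ) (h2 : ϑ < 2) :
    ∃ C, 0 < C ∧ ∀ x, 0 ≤ x → gFun ϑ x ≤ C * fp 1 (x ^ ϑ) := by
  obtain ⟨X, hX⟩ := eventually_atTop.1 (((tendsto_gFun_div h1 h2).eventually
    (gt_mem_nhds one_lt_two)).and (eventually_gt_atTop 1))
  have hA : 0 ≤ gSecondMax ϑ * X ^ (2 - ϑ) / 2 := by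
    have := gSecondMax_pos h2
    have : 0 ≤ X := by linarith [(hX X le_rfl).2]
    positivity
  have hK : 0 < 2 / (ϑ ^ 2 * (ϑ - 1)) := by
    have : 0 < ϑ - 1 := by linarith
    positivity
  set C := max (gSecondMax ϑ * X ^ (2 - ϑ) / 2) (2 / (ϑ ^ 2 * (ϑ - 1)))
  refine ⟨C, lt_max_of_lt_right hK, fun x hx => ?_⟩
  have hxϑ : 0 ≤ x ^ ϑ := rpow_nonneg hx ϑ
  rcases le_total x X with hxX | hXx
  · calc gFun ϑ x ≤ gSecondMax ϑ * X ^ (2 - ϑ) / 2 * x ^ ϑ := gFun_le_mul_rpow h2 hx hxX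
      _ ≤ C * fp 1 (x ^ ϑ) := mul_le_mul (le_max_left _ _) (le_fp_one hxϑ) hxϑ (hA.trans
          (le_max_left _ _))
  obtain ⟨hratio, hx1⟩ := hX x hXx
  have hlog : 0 < log x := log_pos hx1
  have hM : 0 < x ^ ϑ * log x / (ϑ * (ϑ - 1)) := by
    have : 0 < ϑ - 1 := by linarith
    have : 0 < x ^ ϑ := rpow_pos_of_pos (by linarith) ϑ
    positivity
  calc gFun ϑ x ≤ 2 * (x ^ ϑ * log x / (ϑ * (ϑ - 1))) := ((div_lt_iff₀ hM).1 hratio).le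
    _ = 2 / (ϑ ^ 2 * (ϑ - 1)) * (x ^ ϑ * log (x ^ ϑ)) := by
      have : ϑ - 1 ≠ 0 := by linarith
      have : ϑ ≠ 0 := by linarith
      rw [log_rpow (by linarith)]
      field_simp
    _ ≤ C * fp 1 (x ^ ϑ) := mul_le_mul (le_max_right _ _) (mul_log_le_fp_one hxϑ)
        (mul_nonneg hxϑ (log_nonneg (one_le_rpow hx1.le (by linarith)))) (hK.le.trans
          (le_max_right _ _))

end bound

/-- for `ϑ ∈ (1,2)`: `g_ϑ` is convex on `[0,∞)` with (concave) derivative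
`g_ϑ'`, `g_ϑ(x) ∼ x^ϑ log x / (ϑ(ϑ−1))` as `x → ∞`, and there is `C_ϑ > 0` with
`g_ϑ(x) ≤ C_ϑ f_1(x^ϑ)` for all `x ≥ 0`. -/
theorem gFun_properties (ϑ : ℝ) (h1 : 1 < ϑ) (h2 : ϑ < 2) :
    ConvexOn ℝ (Set.Ici 0) (gFun ϑ) ∧
    (∀ x : ℝ, 0 < x → HasDerivAt (gFun ϑ) (gFirst ϑ x) x) ∧
    ConcaveOn ℝ (Set.Ici 0) (gFirst ϑ) ∧
    Tendsto (fun x => gFun ϑ x / (x ^ ϑ * Real.log x / (ϑ * (ϑ - 1)))) atTop (𝓝 1) ∧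
    ∃ C : ℝ, 0 < C ∧ ∀ x : ℝ, 0 ≤ x → gFun ϑ x ≤ C * fp 1 (x ^ ϑ) :=
  ⟨(gFun_convexOn h2).subset (subset_univ _) (convex_Ici 0), fun x _ => hasDerivAt_gFun h2 x,
    (gFirst_concaveOn h2).subset (subset_univ _) (convex_Ici 0), tendsto_gFun_div h1 h2,
    exists_gFun_le_mul_fp h1 h2⟩
end
end
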